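/- arXiv:2305.00670 — 6 statements merged into one kernel-verified Lean document; each statement's English description precedes it below -/
import Mathlib

section
/- Assume t ≤ n ≤ 2t and let s ≥ 1 be an integer. Let a = (a_1,…,a_{n−t+1}) be a tuple of non-negative integers with a_1 + ⋯ + a_{n−t+1} = s, and set α = u_1^{a_1} ⋯ u_{n−t+1}^{a_{n−t+1}}. Let J be the ideal of R generated by all monomials u_1^{b_1} ⋯ u_{n−t+1}^{b_{n−t+1}} where b = (b_1,…,b_{n−t+1}) ∈ ℤ_{≥0}^{n−t+1} satisfies b_1 + ⋯ + b_{n−t+1} = s and b > a in the lexicographic order. Then the colon ideal (J : α) equals the ideal generated by the set of variables { x_{λ−1} : 2 ≤ λ ≤ n−t+1 and a_λ > 0 }. -/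
open MvPolynomial

/-- The variable `x_i` (1-based index) of the polynomial ring `K[x_1,…,x_n]`,
realized as `MvPolynomial (Fin n) K`. -/
noncomputable def xvar (K : Type*) [Field K] (n : ℕ) (i : ℕ) : MvPolynomial (Fin n) K :=
  if h : 1 ≤ i ∧ i ≤ n then MvPolynomial.X ⟨i - 1, by omega⟩ else 0

/-- The path monomial `u_i = x_i x_{i+1} ⋯ x_{i+t-1}` (1-based index). -/
noncomputable def upath (K : Type*) [Field K] (n t : ℕ) (i : ℕ) : MvPolynomial (Fin n) K :=
  ∏ j ∈ Finset.Ico i (i + t), xvar K n j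

namespace Stmt3Aux

noncomputable def g (n : ℕ) (j : ℕ) : Fin n →₀ ℕ :=
  if h : 1 ≤ j ∧ j ≤ n then Finsupp.single ⟨j - 1, by omega⟩ 1 else 0

lemma xvar_eq (K : Type*) [Field K] (n j : ℕ) (h : 1 ≤ j ∧ j ≤ n) :
    xvar K n j = monomial (g n j) 1 := by
  rw [xvar, g, dif_pos h, dif_pos h, X]

noncomputable def E (n t i : ℕ) : Fin n →₀ ℕ := ∑ j ∈ Finset.Ico (i+1) (i+1+t), g n j

lemma E_apply (n t i : ℕ) (hi : i + t ≤ n) (k : Fin n) :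
    E n t i k = if i ≤ k.val ∧ k.val < i + t then 1 else 0 := by
  rw [E, Finsupp.finset_sum_apply]
  rw [Finset.sum_congr rfl (fun j hj => ?_),
    Finset.sum_ite_eq' (Finset.Ico (i+1) (i+1+t)) (k.val+1) (fun _ => 1)]
  · simp only [Finset.mem_Ico]
    exact if_congr (by omega) rfl rfl
  · rw [Finset.mem_Ico] at hj
    rw [g, dif_pos ⟨by omega, by omega⟩, Finsupp.single_apply]
    exact if_congr (by rw [Fin.ext_iff]; simp only []; omega) rfl rfl

noncomputable def D (n t : ℕ) {N : ℕ} (c : Fin N → ℕ) : Fin n →₀ ℕ := ∑ i, c i • E n t i.val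

lemma D_apply (n t : ℕ) {N : ℕ} (hN : N + t ≤ n + 1) (c : Fin N → ℕ) (k : Fin n) :
    D n t c k = ∑ i : Fin N, if i.val ≤ k.val ∧ k.val < i.val + t then c i else 0 := by
  rw [D, Finsupp.finset_sum_apply]
  refine Finset.sum_congr rfl (fun i _ => ?_)
  rw [Finsupp.smul_apply, E_apply n t i.val (by have := i.2; omega), smul_eq_mul,
    mul_ite, mul_one, mul_zero]

lemma upath_eq (K : Type*) [Field K] (n t i : ℕ) (hi : i + t ≤ n) :
    upath K n t (i+1) = monomial (E n t i) 1 := by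
  rw [upath, E, monomial_sum_one]
  refine Finset.prod_congr rfl fun j hj => ?_
  rw [Finset.mem_Ico] at hj
  exact xvar_eq K n j ⟨by omega, by omega⟩

lemma prod_upath (K : Type*) [Field K] (n t : ℕ) {N : ℕ} (hN : N + t ≤ n + 1)
    (c : Fin N → ℕ) :
    (∏ i : Fin N, upath K n t (i.val+1) ^ c i) = monomial (D n t c) (1:K) := by
  rw [D, monomial_sum_one]
  refine Finset.prod_congr rfl fun i _ => ?_
  rw [upath_eq K n t i.val (by have := i.2; omega), monomial_pow, one_pow]

lemma sum_shift {ι : Type*} [DecidableEq ι] (a : ι → ℕ) (p q : ι) (hpq : p ≠ q)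
    (hq : 1 ≤ a q) (S : Finset ι) :
    (∑ i ∈ S, (if i = p then a i + 1 else if i = q then a i - 1 else a i))
      + (if q ∈ S then 1 else 0)
    = (∑ i ∈ S, a i) + (if p ∈ S then 1 else 0) := by
  have key : ∀ i, (if i = p then a i + 1 else if i = q then a i - 1 else a i)
      + (if i = q then 1 else 0) = a i + (if i = p then 1 else 0) := by
    intro i
    by_cases h1 : i = p
    · subst h1; rw [if_pos rfl, if_pos rfl, if_neg hpq]
    · rw [if_neg h1, if_neg h1]
      by_cases h2 : i = q
      · subst h2; rw [if_pos rfl, if_pos rfl]; omega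
      · rw [if_neg h2, if_neg h2]
  rw [← Finset.sum_ite_eq' S q (fun _ => (1:ℕ)), ← Finset.sum_ite_eq' S p (fun _ => (1:ℕ)),
    ← Finset.sum_add_distrib, ← Finset.sum_add_distrib]
  exact Finset.sum_congr rfl fun i _ => key i

end Stmt3Aux

open Stmt3Aux in
/-- for `t ≤ n ≤ 2t`, the colon ideal of the ideal generated by the
lex-larger degree-`st` products of the `u_i` by `α = u_1^{a_1} ⋯ u_{n-t+1}^{a_{n-t+1}}`
is generated by the variables `x_{λ-1}` with `2 ≤ λ ≤ n-t+1` and `a_λ > 0`. -/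
theorem stmt_3 (K : Type*) [Field K] (n t s : ℕ) (ht : 2 ≤ t) (hn1 : t ≤ n) (hn2 : n ≤ 2 * t)
    (hs : 1 ≤ s) (a : Fin (n - t + 1) → ℕ) (ha : (∑ i, a i) = s) :
    (Ideal.span {β : MvPolynomial (Fin n) K |
          ∃ b : Fin (n - t + 1) → ℕ, (∑ i, b i) = s ∧
            (∃ i : Fin (n - t + 1), (∀ j, j < i → a j = b j) ∧ a i < b i) ∧
            β = ∏ i : Fin (n - t + 1), upath K n t (i.val + 1) ^ b i}).colon
        (Ideal.span {∏ i : Fin (n - t + 1), upath K n t (i.val + 1) ^ a i})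
      = Ideal.span {p : MvPolynomial (Fin n) K |
          ∃ lam : Fin (n - t + 1), 1 ≤ lam.val ∧ 0 < a lam ∧ p = xvar K n lam.val} := by
  classical
  have hN : (n - t + 1) + t ≤ n + 1 := by omega
  have hJ : {β : MvPolynomial (Fin n) K |
          ∃ b : Fin (n - t + 1) → ℕ, (∑ i, b i) = s ∧
            (∃ i : Fin (n - t + 1), (∀ j, j < i → a j = b j) ∧ a i < b i) ∧
            β = ∏ i : Fin (n - t + 1), upath K n t (i.val + 1) ^ b i}
      = (fun e => monomial e (1:K)) '' {e : Fin n →₀ ℕ |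
          ∃ b : Fin (n - t + 1) → ℕ, (∑ i, b i) = s ∧
            (∃ i : Fin (n - t + 1), (∀ j, j < i → a j = b j) ∧ a i < b i) ∧
            e = D n t b} := by
    ext β
    constructor
    · rintro ⟨b, h1, h2, rfl⟩
      exact ⟨D n t b, ⟨b, h1, h2, rfl⟩, (prod_upath K n t hN b).symm⟩
    · rintro ⟨e, ⟨b, h1, h2, rfl⟩, rfl⟩
      exact ⟨b, h1, h2, (prod_upath K n t hN b).symm⟩
  have hV : {p : MvPolynomial (Fin n) K |
          ∃ lam : Fin (n - t + 1), 1 ≤ lam.val ∧ 0 < a lam ∧ p = xvar K n lam.val}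
      = MvPolynomial.X '' {k : Fin n |
          ∃ lam : Fin (n - t + 1), 1 ≤ lam.val ∧ 0 < a lam ∧ k.val = lam.val - 1} := by
    ext p
    constructor
    · rintro ⟨lam, h1, h2, rfl⟩
      have hb : lam.val - 1 < n := by have := lam.2; omega
      refine ⟨⟨lam.val - 1, hb⟩, ⟨lam, h1, h2, rfl⟩, ?_⟩
      rw [xvar, dif_pos ⟨h1, by have := lam.2; omega⟩]
    · rintro ⟨k, ⟨lam, h1, h2, hk⟩, rfl⟩
      refine ⟨lam, h1, h2, ?_⟩
      rw [xvar, dif_pos ⟨h1, by have := lam.2; omega⟩]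
      congr 1
      exact Fin.ext hk
  rw [hJ, hV, prod_upath K n t hN a]
  ext f
  rw [Ideal.mem_colon_span_singleton, mem_ideal_span_monomial_image, mem_ideal_span_X_image]
  constructor
  · -- hard direction
    intro h m hm
    have hm' : m + D n t a ∈ (f * monomial (D n t a) (1:K)).support := by
      rw [MvPolynomial.mem_support_iff] at hm ⊢
      rw [coeff_mul_monomial, mul_one]
      exact hm
    obtain ⟨e, ⟨b, hb1, ⟨i0, hi0a, hi0b⟩, rfl⟩, hle⟩ := h _ hm'
    have hTne : (Finset.univ.filter
        (fun j : Fin (n - t + 1) => i0 < j ∧ b j < a j)).Nonempty := by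
      by_contra hemp
      rw [Finset.not_nonempty_iff_eq_empty, Finset.filter_eq_empty_iff] at hemp
      have hlt : (∑ i, a i) < ∑ i, b i := by
        refine Finset.sum_lt_sum (fun i _ => ?_) ⟨i0, Finset.mem_univ _, hi0b⟩
        rcases lt_trichotomy i i0 with h' | h' | h'
        · exact (hi0a i h').le
        · subst h'; exact hi0b.le
        · have := hemp (Finset.mem_univ i)
          simp only [not_and, not_lt] at this
          exact this h'
      omega
    obtain ⟨lam, hlammem, hlammin⟩ := Finset.exists_min_image
      (Finset.univ.filter (fun j : Fin (n - t + 1) => i0 < j ∧ b j < a j)) id hTne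
    rw [Finset.mem_filter] at hlammem
    have hlam : i0 < lam ∧ b lam < a lam := hlammem.2
    have hmin : ∀ j, j < lam → ¬(i0 < j ∧ b j < a j) := by
      intro j hj hcon
      have : lam ≤ j := hlammin j
        (Finset.mem_filter.mpr ⟨Finset.mem_univ _, hcon⟩)
      exact absurd hj (not_lt.mpr this)
    have hlamval : 1 ≤ lam.val := by
      have : i0.val < lam.val := hlam.1
      omega
    have hkb : lam.val - 1 < n := by have := lam.2; omega
    set k0 : Fin n := ⟨lam.val - 1, hkb⟩ with hk0def
    have hk0val : k0.val = lam.val - 1 := rfl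
    refine ⟨k0, ⟨lam, hlamval, by omega, hk0val⟩, ?_⟩
    have h1 := Finsupp.le_def.mp hle k0
    rw [Finsupp.add_apply, D_apply n t hN b, D_apply n t hN a] at h1
    have hsums : (∑ i : Fin (n - t + 1),
          if i.val ≤ k0.val ∧ k0.val < i.val + t then a i else 0)
        < ∑ i : Fin (n - t + 1),
          if i.val ≤ k0.val ∧ k0.val < i.val + t then b i else 0 := by
      have hP : ∀ i : Fin (n - t + 1),
          (i.val ≤ k0.val ∧ k0.val < i.val + t) → a i ≤ b i := by
        intro i hPi
        have hilam : i < lam := by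
          show i.val < lam.val
          omega
        rcases lt_trichotomy i i0 with h' | h' | h'
        · exact (hi0a i h').le
        · subst h'; exact hi0b.le
        · have := hmin i hilam
          simp only [not_and, not_lt] at this
          exact this h'
      refine Finset.sum_lt_sum (fun i _ => ?_) ⟨i0, Finset.mem_univ _, ?_⟩
      · by_cases hPi : i.val ≤ k0.val ∧ k0.val < i.val + t
        · rw [if_pos hPi, if_pos hPi]; exact hP i hPi
        · rw [if_neg hPi, if_neg hPi]
      · have hPi0 : i0.val ≤ k0.val ∧ k0.val < i0.val + t := by
          have h1' : i0.val < lam.val := hlam.1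
          have h2' : lam.val < n - t + 1 := lam.2
          omega
        rw [if_pos hPi0, if_pos hPi0]
        exact hi0b
    simp only [ne_eq]
    omega
  · -- easy direction
    intro h m' hm'
    rw [MvPolynomial.mem_support_iff, coeff_mul_monomial'] at hm'
    by_cases hle : D n t a ≤ m'
    · rw [if_pos hle, mul_one] at hm'
      set m := m' - D n t a with hmdef
      have hm : m ∈ f.support := MvPolynomial.mem_support_iff.mpr hm'
      obtain ⟨k0, ⟨lam, hl1, hl2, hk0⟩, hmk⟩ := h m hm
      have hlb : lam.val - 1 < n - t + 1 := by have := lam.2; omega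
      set lam' : Fin (n - t + 1) := ⟨lam.val - 1, hlb⟩ with hlam'def
      have hne : lam' ≠ lam := by
        intro hcon
        have := congrArg Fin.val hcon
        simp only [hlam'def] at this
        omega
      set b : Fin (n - t + 1) → ℕ :=
        fun i => if i = lam' then a i + 1 else if i = lam then a i - 1 else a i with hbdef
      have hbsum : (∑ i, b i) = s := by
        have h2 := sum_shift a lam' lam hne hl2 Finset.univ
        simp only [Finset.mem_univ, if_true] at h2
        have h3 : (∑ i, b i) = ∑ i, (if i = lam' then a i + 1
            else if i = lam then a i - 1 else a i) :=
          Finset.sum_congr rfl fun i _ => by simp only [hbdef]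
        omega
      refine ⟨D n t b, ⟨b, hbsum, ⟨lam', ?_, ?_⟩, rfl⟩, ?_⟩
      · intro j hj
        have hjval : j.val < lam.val - 1 := hj
        simp only [hbdef]
        rw [if_neg, if_neg]
        · intro hcon; subst hcon; omega
        · intro hcon
          have := congrArg Fin.val hcon
          simp only [hlam'def] at this
          omega
      · simp [hbdef]
      · -- D n t b ≤ m' = m + D n t a
        have hm'eq : m' = m + D n t a := by
          rw [hmdef]
          ext k
          have := Finsupp.le_def.mp hle k
          simp only [Finsupp.add_apply, Finsupp.tsub_apply]
          omega
        rw [hm'eq, Finsupp.le_def]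
        intro k
        rw [Finsupp.add_apply, D_apply n t hN b, D_apply n t hN a]
        have hshift := sum_shift a lam' lam hne hl2
          (Finset.univ.filter (fun i : Fin (n - t + 1) => i.val ≤ k.val ∧ k.val < i.val + t))
        rw [Finset.sum_filter, Finset.sum_filter] at hshift
        simp only [Finset.mem_filter, Finset.mem_univ, true_and] at hshift
        have hsb : (∑ i : Fin (n - t + 1), if i.val ≤ k.val ∧ k.val < i.val + t then b i else 0)
            = ∑ i : Fin (n - t + 1), if i.val ≤ k.val ∧ k.val < i.val + t
                then (if i = lam' then a i + 1 else if i = lam then a i - 1 else a i) else 0 := by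
          refine Finset.sum_congr rfl fun i _ => ?_
          simp only [hbdef]
        rw [hsb]
        by_cases hQ : lam'.val ≤ k.val ∧ k.val < lam'.val + t
        · by_cases hR : lam.val ≤ k.val ∧ k.val < lam.val + t
          · rw [if_pos hQ, if_pos hR] at hshift
            omega
          · -- k = lam' as index: k.val = lam.val - 1
            have hkval : k.val = lam.val - 1 := by
              simp only [hlam'def] at hQ
              omega
            have hkk0 : k = k0 := by
              rcases hk0 with hk0
              exact Fin.ext (by omega)
            have : m k ≠ 0 := by rw [hkk0]; exact hmk
            rw [if_pos hQ, if_neg hR] at hshift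
            omega
        · rw [if_neg hQ] at hshift
          by_cases hR : lam.val ≤ k.val ∧ k.val < lam.val + t
          · rw [if_pos hR] at hshift; omega
          · rw [if_neg hR] at hshift; omega
    · rw [if_neg hle] at hm'
      exact absurd rfl hm'
end

section
/- Assume t ≤ n ≤ 2t and let s ≥ 1 be an integer. Let G = { u_1^{a_1} ⋯ u_{n−t+1}^{a_{n−t+1}} : a ∈ ℤ_{≥0}^{n−t+1}, a_1 + ⋯ + a_{n−t+1} = s }, and let q = |G|. Then there exists an enumeration α_1, α_2, …, α_q of G such that for every j with 2 ≤ j ≤ q, the colon ideal (α_1,…,α_{j−1}) : α_j is generated by a subset of the variables {x_1,…,x_n}; that is, I^s has linear quotients. -/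
open MvPolynomial

section Aux
variable {K : Type*} [Field K]

lemma prod_monomial_one {β : Type*} {σ : Type*} (s : Finset β) (g : β → (σ →₀ ℕ)) :
    ∏ j ∈ s, monomial (g j) (1 : K) = monomial (∑ j ∈ s, g j) 1 := by
  induction s using Finset.cons_induction with
  | empty => simp
  | cons a s ha ih => rw [Finset.prod_cons, Finset.sum_cons, ih, monomial_mul, one_mul]

/-- exponent vector of `u^a` -/
noncomputable def Emap (n t : ℕ) (a : Fin (n - t + 1) → ℕ) : Fin n →₀ ℕ :=
  Finsupp.equivFunOnFinite.symm
    (fun r => ∑ i ∈ Finset.univ.filter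
      (fun i : Fin (n - t + 1) => i.val ≤ r.val ∧ r.val < i.val + t), a i)

@[simp] lemma Emap_apply (n t : ℕ) (a : Fin (n - t + 1) → ℕ) (r : Fin n) :
    Emap n t a r = ∑ i ∈ Finset.univ.filter
      (fun i : Fin (n - t + 1) => i.val ≤ r.val ∧ r.val < i.val + t), a i := rfl

lemma Emap_add (n t : ℕ) (a b : Fin (n - t + 1) → ℕ) :
    Emap n t (a + b) = Emap n t a + Emap n t b := by
  ext r
  simp [Emap_apply, Finset.sum_add_distrib]

/-- indicator vector -/
def dvec {m : ℕ} (i : Fin m) : Fin m → ℕ := fun j => if j = i then 1 else 0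

lemma Emap_dvec_apply (n t : ℕ) (i : Fin (n - t + 1)) (r : Fin n) :
    Emap n t (dvec i) r = if i.val ≤ r.val ∧ r.val < i.val + t then 1 else 0 := by
  rw [Emap_apply, Finset.sum_filter]
  have : ∀ j : Fin (n - t + 1),
      (if j.val ≤ r.val ∧ r.val < j.val + t then dvec i j else 0)
        = if j = i then (if j.val ≤ r.val ∧ r.val < j.val + t then 1 else 0) else 0 := by
    intro j
    unfold dvec
    by_cases h : j = i <;> by_cases h2 : j.val ≤ r.val ∧ r.val < j.val + t <;> simp [h, h2]
  rw [Finset.sum_congr rfl (fun j _ => this j),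
    Finset.sum_ite_eq' Finset.univ i (fun j => if j.val ≤ r.val ∧ r.val < j.val + t then 1 else 0)]
  simp

lemma sum_dvec {m : ℕ} (i : Fin m) : ∑ j, dvec i j = 1 := by
  simp [dvec]

lemma upath_eq {n t : ℕ} (ht : 1 ≤ t) (hn1 : t ≤ n) (i : Fin (n - t + 1)) :
    upath K n t (i.val + 1) = monomial (Emap n t (dvec i)) (1 : K) := by
  have hin : i.val ≤ n - t := by omega
  have hn0 : 0 < n := by omega
  set f : ℕ → Fin n := fun j => ⟨min (j - 1) (n - 1), by omega⟩ with hf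
  have hx : ∀ j ∈ Finset.Ico (i.val + 1) (i.val + 1 + t), xvar K n j = X (f j) := by
    intro j hj
    rw [Finset.mem_Ico] at hj
    have h1 : 1 ≤ j ∧ j ≤ n := by omega
    rw [xvar, dif_pos h1]
    congr 1
    apply Fin.ext
    simp [hf]
    omega
  rw [upath, Finset.prod_congr rfl hx]
  have : ∀ j ∈ Finset.Ico (i.val + 1) (i.val + 1 + t),
      (X (f j) : MvPolynomial (Fin n) K) = monomial (Finsupp.single (f j) 1) 1 := by
    intro j _; rw [X, monomial]
  rw [Finset.prod_congr rfl this, prod_monomial_one]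
  have heq : (∑ j ∈ Finset.Ico (i.val + 1) (i.val + 1 + t), Finsupp.single (f j) 1)
      = Emap n t (dvec i) := by
    ext r
    rw [Finsupp.finset_sum_apply]
    have hstep : ∀ j ∈ Finset.Ico (i.val + 1) (i.val + 1 + t),
        (Finsupp.single (f j) 1 : Fin n →₀ ℕ) r
          = if j = r.val + 1 then 1 else 0 := by
      intro j hj
      rw [Finset.mem_Ico] at hj
      rw [Finsupp.single_apply]
      have hiff : f j = r ↔ j = r.val + 1 := by
        constructor
        · intro h; have := congrArg Fin.val h; simp [hf] at this; omega
        · intro h; apply Fin.ext; simp [hf]; omega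
      by_cases h : f j = r
      · rw [if_pos h, if_pos (hiff.mp h)]
      · rw [if_neg h, if_neg (fun hh => h (hiff.mpr hh))]
    rw [Finset.sum_congr rfl hstep, Finset.sum_ite_eq' (Finset.Ico (i.val + 1) (i.val + 1 + t))
      (r.val + 1) (fun _ => 1), Emap_dvec_apply]
    simp only [Finset.mem_Ico]
    by_cases h : i.val ≤ r.val ∧ r.val < i.val + t
    · rw [if_pos (by omega), if_pos h]
    · rw [if_neg (by omega), if_neg h]
  rw [heq]

lemma prod_upath_eq {n t : ℕ} (ht : 1 ≤ t) (hn1 : t ≤ n) (a : Fin (n - t + 1) → ℕ) :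
    ∏ i, upath K n t (i.val + 1) ^ a i = monomial (Emap n t a) (1 : K) := by
  have h1 : ∀ i : Fin (n - t + 1),
      upath K n t (i.val + 1) ^ a i = monomial (a i • Emap n t (dvec i)) (1 : K) := by
    intro i
    rw [upath_eq ht hn1, monomial_pow, one_pow]
  rw [Finset.prod_congr rfl (fun i _ => h1 i), prod_monomial_one]
  have heq : (∑ j : Fin (n - t + 1), a j • Emap n t (dvec j)) = Emap n t a := by
    ext r
    rw [Finsupp.finset_sum_apply]
    simp only [Finsupp.smul_apply, Emap_dvec_apply, smul_eq_mul, mul_ite, mul_one, mul_zero,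
      Emap_apply]
    rw [Finset.sum_filter]
    refine Finset.sum_congr rfl (fun x _ => ?_)
    simp only [dvec]
    rw [Finset.sum_ite_eq' (Finset.filter _ Finset.univ) x (fun _ => 1)]
    by_cases h : x.val ≤ r.val ∧ r.val < x.val + t <;> simp [Finset.mem_filter, h]
  rw [heq]

lemma Emap_prefix {n t : ℕ} (a : Fin (n - t + 1) → ℕ) (r : Fin n) (hr : r.val < t) :
    Emap n t a r = ∑ i ∈ Finset.univ.filter
      (fun i : Fin (n - t + 1) => i.val ≤ r.val), a i := by
  rw [Emap_apply]
  apply Finset.sum_congr _ (fun _ _ => rfl)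
  apply Finset.filter_congr
  intro i _
  constructor
  · exact fun h => h.1
  · exact fun h => ⟨h, by omega⟩

/-- Key combinatorial lemma. -/
lemma key {n t : ℕ} (ht : 2 ≤ t) (hn1 : t ≤ n) (hn2 : n ≤ 2 * t)
    {a b : Fin (n - t + 1) → ℕ} (hsum : ∑ i, a i = ∑ i, b i)
    (hlt : toLex a < toLex b) :
    ∃ l : Fin (n - t + 1), ∃ hl : l.val - 1 < n, 1 ≤ l.val ∧ 0 < a l ∧
      Emap n t a ⟨l.val - 1, hl⟩ < Emap n t b ⟨l.val - 1, hl⟩ := by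
  obtain ⟨k, hkeq, hklt⟩ := hlt
  -- candidates
  set C := Finset.univ.filter (fun i : Fin (n - t + 1) => k < i ∧ 0 < a i) with hC
  have hCne : C.Nonempty := by
    by_contra hne
    rw [Finset.not_nonempty_iff_eq_empty] at hne
    have hz : ∀ i : Fin (n - t + 1), k < i → a i = 0 := by
      intro i hi
      by_contra h
      have : i ∈ C := by
        rw [hC, Finset.mem_filter]
        exact ⟨Finset.mem_univ _, hi, Nat.pos_of_ne_zero h⟩
      rw [hne] at this
      exact absurd this (Finset.notMem_empty i)
    have h1 : ∑ i, a i = ∑ i ∈ Finset.univ.filter (fun i => i ≤ k), a i := by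
      refine (Finset.sum_subset (Finset.filter_subset _ _) ?_).symm
      intro i _ hi
      rw [Finset.mem_filter] at hi
      have : ¬ i ≤ k := fun h => hi ⟨Finset.mem_univ _, h⟩
      exact hz i (lt_of_not_ge this)
    have h2 : ∑ i ∈ Finset.univ.filter (fun i => i ≤ k), a i
        < ∑ i ∈ Finset.univ.filter (fun i => i ≤ k), b i := by
      apply Finset.sum_lt_sum
      · intro i hi
        rw [Finset.mem_filter] at hi
        rcases lt_or_eq_of_le hi.2 with h | h
        · exact le_of_eq (hkeq i h)
        · subst h; exact le_of_lt hklt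
      · exact ⟨k, by simp [Finset.mem_filter], hklt⟩
    have h3 : ∑ i ∈ Finset.univ.filter (fun i => i ≤ k), b i ≤ ∑ i, b i :=
      Finset.sum_le_sum_of_subset (Finset.filter_subset _ _)
    omega
  set l := C.min' hCne with hldef
  have hlC : l ∈ C := Finset.min'_mem _ _
  rw [hC, Finset.mem_filter] at hlC
  obtain ⟨-, hkl, hal⟩ := hlC
  have hlmin : ∀ i : Fin (n - t + 1), k < i → i < l → a i = 0 := by
    intro i hki hil
    by_contra h
    have : i ∈ C := by
      rw [hC, Finset.mem_filter]
      exact ⟨Finset.mem_univ _, hki, Nat.pos_of_ne_zero h⟩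
    exact absurd (Finset.min'_le _ _ this) (not_le.mpr hil)
  have hkv : k.val < l.val := hkl
  have hlv : l.val ≤ n - t := by omega
  have hl : l.val - 1 < n := by omega
  refine ⟨l, hl, by omega, hal, ?_⟩
  have hrt : l.val - 1 < t := by omega
  rw [Emap_prefix a _ hrt, Emap_prefix b _ hrt]
  simp only [Fin.val_mk]
  -- ∑_{i ≤ l-1} a < ∑_{i ≤ l-1} b
  have ha1 : ∑ i ∈ Finset.univ.filter (fun i : Fin (n - t + 1) => i.val ≤ l.val - 1), a i
      = ∑ i ∈ Finset.univ.filter (fun i : Fin (n - t + 1) => i.val ≤ k.val), a i := by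
    refine (Finset.sum_subset ?_ ?_).symm
    · intro i hi
      rw [Finset.mem_filter] at hi ⊢
      refine ⟨Finset.mem_univ _, by omega⟩
    · intro i hi hni
      rw [Finset.mem_filter] at hi hni
      push_neg at hni
      have h1 : k.val < i.val := by
        have := hni (Finset.mem_univ _); omega
      exact hlmin i h1 (by omega)
  have ha2 : ∑ i ∈ Finset.univ.filter (fun i : Fin (n - t + 1) => i.val ≤ k.val), a i
      < ∑ i ∈ Finset.univ.filter (fun i : Fin (n - t + 1) => i.val ≤ k.val), b i := by
    apply Finset.sum_lt_sum
    · intro i hi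
      rw [Finset.mem_filter] at hi
      rcases Nat.lt_or_ge i.val k.val with h | h
      · exact le_of_eq (hkeq i h)
      · have : i = k := Fin.ext (le_antisymm hi.2 h)
        subst this; exact le_of_lt hklt
    · exact ⟨k, by simp [Finset.mem_filter], hklt⟩
  have ha3 : ∑ i ∈ Finset.univ.filter (fun i : Fin (n - t + 1) => i.val ≤ k.val), b i
      ≤ ∑ i ∈ Finset.univ.filter (fun i : Fin (n - t + 1) => i.val ≤ l.val - 1), b i := by
    apply Finset.sum_le_sum_of_subset
    intro i hi
    rw [Finset.mem_filter] at hi ⊢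
    exact ⟨Finset.mem_univ _, by omega⟩
  omega

lemma swap {n t : ℕ} (ht : 2 ≤ t) (hn1 : t ≤ n) (a : Fin (n - t + 1) → ℕ)
    (iv : Fin (n - t + 1)) (h1 : 1 ≤ iv.val) (ha : 0 < a iv) :
    ∃ a' : Fin (n - t + 1) → ℕ, (∑ i, a' i = ∑ i, a i) ∧ toLex a < toLex a' ∧
      ∃ (hlo : iv.val - 1 < n) (hhi : iv.val + t - 1 < n),
      (X ⟨iv.val - 1, hlo⟩ : MvPolynomial (Fin n) K) * monomial (Emap n t a) 1
        = X ⟨iv.val + t - 1, hhi⟩ * monomial (Emap n t a') 1 := by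
  have hivn : iv.val ≤ n - t := by omega
  have hlo : iv.val - 1 < n := by omega
  have hhi : iv.val + t - 1 < n := by omega
  set ppred : Fin (n - t + 1) := ⟨iv.val - 1, by omega⟩ with hpp
  have hppv : ppred.val = iv.val - 1 := rfl
  have hppne : ppred ≠ iv := by
    intro h
    have := congrArg Fin.val h
    rw [hppv] at this
    omega
  set a' : Fin (n - t + 1) → ℕ :=
    fun j => if j = iv then a iv - 1 else if j = ppred then a j + 1 else a j with ha'
  have e1 : a + dvec ppred = a' + dvec iv := by
    funext jj
    simp only [Pi.add_apply, dvec, ha']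
    by_cases h : jj = iv
    · subst h
      rw [if_pos rfl, if_pos rfl, if_neg (fun hh => hppne hh.symm)]
      omega
    · rw [if_neg h, if_neg h]
      by_cases h2 : jj = ppred
      · rw [if_pos h2, if_pos h2]
      · rw [if_neg h2, if_neg h2]
  have hsum : ∑ i, a' i = ∑ i, a i := by
    have := congrArg (fun f => ∑ i, f i) e1
    simp only [Pi.add_apply, Finset.sum_add_distrib, sum_dvec] at this
    omega
  have hlex : toLex a < toLex a' := by
    refine ⟨ppred, ?_, ?_⟩
    · intro jj hj
      have hjv : jj.val < ppred.val := hj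
      have hne1 : jj ≠ iv := by
        intro h; rw [h] at hjv; omega
      have hne2 : jj ≠ ppred := by
        intro h; rw [h] at hjv; omega
      show a jj = a' jj
      simp only [ha', if_neg hne1, if_neg hne2]
    · show a ppred < a' ppred
      have hval : a' ppred = a ppred + 1 := by simp [ha', hppne]
      omega
  refine ⟨a', hsum, hlex, hlo, hhi, ?_⟩
  have e2 : Emap n t a + Emap n t (dvec ppred) = Emap n t a' + Emap n t (dvec iv) := by
    rw [← Emap_add, ← Emap_add, e1]
  have e4 : Finsupp.single (⟨iv.val - 1, hlo⟩ : Fin n) 1 + Emap n t a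
      = Finsupp.single (⟨iv.val + t - 1, hhi⟩ : Fin n) 1 + Emap n t a' := by
    ext r
    have h2 := DFunLike.congr_fun e2 r
    simp only [Finsupp.add_apply, Emap_dvec_apply, hppv] at h2 ⊢
    rw [Finsupp.single_apply, Finsupp.single_apply]
    have hiff1 : ((⟨iv.val - 1, hlo⟩ : Fin n) = r) ↔ r.val = iv.val - 1 := by
      rw [Fin.ext_iff]; simp; omega
    have hiff2 : ((⟨iv.val + t - 1, hhi⟩ : Fin n) = r) ↔ r.val = iv.val + t - 1 := by
      rw [Fin.ext_iff]; simp; omega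
    rw [if_congr hiff1 rfl rfl, if_congr hiff2 rfl rfl]
    split_ifs at h2 ⊢ <;> omega
  rw [X, X, monomial_mul, monomial_mul, one_mul, e4]

lemma geom_aux (s : ℕ) : ∀ d : ℕ, ∑ j ∈ Finset.range d, s * (s + 1) ^ j = (s + 1) ^ d - 1 := by
  intro d
  induction d with
  | zero => simp
  | succ d ih =>
    rw [Finset.sum_range_succ, ih, pow_succ]
    have h1 : 1 ≤ (s + 1) ^ d := Nat.one_le_pow _ _ (by omega)
    have h2 : (s + 1) ^ d * (s + 1) = s * (s + 1) ^ d + (s + 1) ^ d := by ring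
    omega

lemma lex_trichot {m : ℕ} {a b : Fin m → ℕ} (h : a ≠ b) :
    toLex a < toLex b ∨ toLex b < toLex a := by
  set D := Finset.univ.filter (fun i : Fin m => a i ≠ b i) with hD
  have hDne : D.Nonempty := by
    obtain ⟨i, hi⟩ := Function.ne_iff.mp h
    exact ⟨i, by simp [hD, hi]⟩
  set k := D.min' hDne with hk
  have hkD : k ∈ D := Finset.min'_mem _ _
  rw [hD, Finset.mem_filter] at hkD
  have hmin : ∀ j : Fin m, j < k → a j = b j := by
    intro j hj
    by_contra hne
    have : j ∈ D := by simp [hD, hne]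
    exact absurd (Finset.min'_le _ _ this) (not_le.mpr hj)
  rcases Nat.lt_or_ge (a k) (b k) with h1 | h1
  · exact Or.inl ⟨k, hmin, h1⟩
  · have h2 : b k < a k := lt_of_le_of_ne h1 (Ne.symm hkD.2)
    exact Or.inr ⟨k, fun j hj => (hmin j hj).symm, h2⟩

lemma lex_asymm {m : ℕ} {a b : Fin m → ℕ} (h1 : toLex a < toLex b) (h2 : toLex b < toLex a) :
    False :=
  absurd (trans_of (· < ·) h1 h2) (irrefl_of (· < ·) (toLex a))

lemma wlt {m s : ℕ} {a b : Fin m → ℕ} (ha : ∀ i, a i ≤ s) (h : toLex a < toLex b) :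
    ∑ i, a i * (s + 1) ^ (m - 1 - i.val) < ∑ i, b i * (s + 1) ^ (m - 1 - i.val) := by
  obtain ⟨k, heq, hklt⟩ := h
  set P := (s + 1) ^ (m - 1 - k.val) with hP
  have hsplit : ∀ x : Fin m → ℕ, ∑ i, x i * (s + 1) ^ (m - 1 - i.val)
      = (∑ i ∈ Finset.univ.filter (fun i : Fin m => i.val < k.val),
          x i * (s + 1) ^ (m - 1 - i.val))
        + (x k * P
        + ∑ i ∈ Finset.univ.filter (fun i : Fin m => k.val < i.val),
            x i * (s + 1) ^ (m - 1 - i.val)) := by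
    intro x
    rw [← Finset.sum_filter_add_sum_filter_not Finset.univ (fun i : Fin m => i.val < k.val)]
    congr 1
    have hset : Finset.univ.filter (fun i : Fin m => ¬ i.val < k.val)
        = insert k (Finset.univ.filter (fun i : Fin m => k.val < i.val)) := by
      ext i
      simp [Fin.ext_iff]
      omega
    rw [hset, Finset.sum_insert (by simp)]
  rw [hsplit a, hsplit b]
  -- prefix sums equal
  have hpre : ∑ i ∈ Finset.univ.filter (fun i : Fin m => i.val < k.val),
        a i * (s + 1) ^ (m - 1 - i.val)
      = ∑ i ∈ Finset.univ.filter (fun i : Fin m => i.val < k.val),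
        b i * (s + 1) ^ (m - 1 - i.val) := by
    refine Finset.sum_congr rfl (fun i hi => ?_)
    rw [Finset.mem_filter] at hi
    exact congrArg (fun z => z * (s + 1) ^ (m - 1 - i.val)) (heq i hi.2)
  -- tail bound for a
  have htail : ∑ i ∈ Finset.univ.filter (fun i : Fin m => k.val < i.val),
      a i * (s + 1) ^ (m - 1 - i.val) ≤ P - 1 := by
    have h1 : ∑ i ∈ Finset.univ.filter (fun i : Fin m => k.val < i.val),
        a i * (s + 1) ^ (m - 1 - i.val)
        ≤ ∑ i ∈ Finset.univ.filter (fun i : Fin m => k.val < i.val),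
          s * (s + 1) ^ (m - 1 - i.val) :=
      Finset.sum_le_sum (fun i _ => Nat.mul_le_mul_right _ (ha i))
    have hm1 : k.val < m := k.isLt
    have himg : Finset.univ.filter (fun i : Fin m => k.val < i.val)
        = (Finset.range (m - 1 - k.val)).image (fun j => (⟨m - 1 - j, by omega⟩ : Fin m)) := by
      ext i
      simp only [Finset.mem_filter, Finset.mem_univ, true_and, Finset.mem_image,
        Finset.mem_range, Fin.ext_iff]
      constructor
      · intro hi
        have hi2 := i.isLt
        exact ⟨m - 1 - i.val, by omega, by omega⟩
      · rintro ⟨j, hj, hji⟩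
        omega
    have hinj : ∀ x ∈ Finset.range (m - 1 - k.val), ∀ y ∈ Finset.range (m - 1 - k.val),
        (⟨m - 1 - x, by omega⟩ : Fin m)
          = ⟨m - 1 - y, by omega⟩ → x = y := by
      intro x hx y hy hxy
      rw [Finset.mem_range] at hx hy
      have := congrArg Fin.val hxy
      simp at this
      omega
    have h2 : ∑ i ∈ Finset.univ.filter (fun i : Fin m => k.val < i.val),
          s * (s + 1) ^ (m - 1 - i.val)
        = ∑ j ∈ Finset.range (m - 1 - k.val), s * (s + 1) ^ j := by
      rw [himg, Finset.sum_image hinj]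
      refine Finset.sum_congr rfl (fun j hj => ?_)
      rw [Finset.mem_range] at hj
      congr 2
      simp
      omega
    rw [h2, geom_aux] at h1
    exact h1
  have hPpos : 1 ≤ P := Nat.one_le_pow _ _ (by omega)
  have hstep : a k * P + P ≤ b k * P := by
    have h5 : (a k + 1) * P ≤ b k * P := Nat.mul_le_mul_right _ hklt
    have h4 : (a k + 1) * P = a k * P + P := by ring
    omega
  omega

end Aux


/-- for `t ≤ n ≤ 2t` and `s ≥ 1`, `I_t(L_n)^s` has linear quotients:
there is an enumeration `α_1,…,α_q` of the generating monomials such that each colon ideal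
`(α_1,…,α_{j-1}) : α_j` (for `2 ≤ j ≤ q`) is generated by a subset of the variables. -/
theorem stmt_4 (K : Type*) [Field K] (n t s : ℕ) (ht : 2 ≤ t) (hn1 : t ≤ n) (hn2 : n ≤ 2 * t)
    (hs : 1 ≤ s) :
    ∃ (q : ℕ) (α : Fin q → MvPolynomial (Fin n) K),
      Function.Injective α ∧
      Set.range α = {β : MvPolynomial (Fin n) K |
        ∃ a : Fin (n - t + 1) → ℕ, (∑ i, a i) = s ∧
          β = ∏ i : Fin (n - t + 1), upath K n t (i.val + 1) ^ a i} ∧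
      ∀ j : Fin q, 1 ≤ j.val →
        ∃ S : Set (MvPolynomial (Fin n) K),
          S ⊆ {p | ∃ k : Fin n, p = MvPolynomial.X k} ∧
          (Ideal.span (α '' {i | i < j})).colon (Ideal.span {α j}) = Ideal.span S := by
  classical
  have ht1 : 1 ≤ t := by omega
  set A0 : Finset (Fin (n - t + 1) → ℕ) :=
    ((Finset.univ : Finset (Fin (n - t + 1) → Fin (s + 1))).image
      (fun f i => (f i : ℕ))).filter (fun a => ∑ i, a i = s) with hA0def
  have hA0 : ∀ a : Fin (n - t + 1) → ℕ, a ∈ A0 ↔ ∑ i, a i = s := by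
    intro a
    constructor
    · intro h; exact (Finset.mem_filter.mp h).2
    · intro h
      refine Finset.mem_filter.mpr
        ⟨Finset.mem_image.mpr ⟨fun i => ⟨a i, ?_⟩, Finset.mem_univ _, rfl⟩, h⟩
      have : a i ≤ ∑ j, a j := Finset.single_le_sum (fun j _ => Nat.zero_le _) (Finset.mem_univ i)
      omega
  have hbdd : ∀ a : Fin (n - t + 1) → ℕ, (∑ i, a i = s) → ∀ i, a i ≤ s := by
    intro a h i
    have : a i ≤ ∑ j, a j := Finset.single_le_sum (fun j _ => Nat.zero_le _) (Finset.mem_univ i)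
    omega
  set w : (Fin (n - t + 1) → ℕ) → ℕ :=
    fun a => ∑ i, a i * (s + 1) ^ (n - t + 1 - 1 - i.val) with hwdef
  have hwlt : ∀ a b : Fin (n - t + 1) → ℕ, (∑ i, a i = s) →
      toLex a < toLex b → w a < w b :=
    fun a b hsa h => wlt (hbdd a hsa) h
  have hwiff : ∀ a b : Fin (n - t + 1) → ℕ, (∑ i, a i = s) → (∑ i, b i = s) →
      (toLex a < toLex b ↔ w a < w b) := by
    intro a b hsa hsb
    constructor
    · exact hwlt a b hsa
    · intro h
      by_contra hne
      rcases eq_or_ne a b with rfl | hab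
      · exact lt_irrefl _ h
      · rcases lex_trichot hab with h1 | h1
        · exact hne h1
        · exact absurd (hwlt b a hsb h1) (by omega)
  have hwinj : ∀ a b : Fin (n - t + 1) → ℕ, (∑ i, a i = s) → (∑ i, b i = s) →
      w a = w b → a = b := by
    intro a b hsa hsb h
    by_contra hab
    rcases lex_trichot hab with h1 | h1
    · exact absurd (hwlt a b hsa h1) (by omega)
    · exact absurd (hwlt b a hsb h1) (by omega)
  set A1 : Finset ℕ := A0.image w with hA1def
  set q := A1.card with hq
  let v := A1.orderIsoOfFin rfl
  have avecP : ∀ j : Fin q, ∃ a, a ∈ A0 ∧ w a = (v j.rev : ℕ) :=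
    fun j => Finset.mem_image.mp (v j.rev).2
  let avec : Fin q → (Fin (n - t + 1) → ℕ) := fun j => (avecP j).choose
  have havec1 : ∀ j, avec j ∈ A0 := fun j => (avecP j).choose_spec.1
  have havec2 : ∀ j, w (avec j) = (v j.rev : ℕ) := fun j => (avecP j).choose_spec.2
  have havsum : ∀ j, ∑ i, avec j i = s := fun j => (hA0 _).mp (havec1 j)
  have hlt_iff : ∀ i j : Fin q, i < j ↔ toLex (avec j) < toLex (avec i) := by
    intro i j
    rw [hwiff _ _ (havsum j) (havsum i), havec2, havec2]
    constructor
    · intro h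
      exact Subtype.coe_lt_coe.mpr (v.lt_iff_lt.mpr (Fin.rev_lt_rev.mpr h))
    · intro h
      exact Fin.rev_lt_rev.mp (v.lt_iff_lt.mp (Subtype.coe_lt_coe.mp h))
  let α : Fin q → MvPolynomial (Fin n) K := fun j => monomial (Emap n t (avec j)) 1
  have hα : ∀ j, α j = monomial (Emap n t (avec j)) 1 := fun j => rfl
  have EmapInj : ∀ a b : Fin (n - t + 1) → ℕ, (∑ i, a i = s) → (∑ i, b i = s) →
      Emap n t a = Emap n t b → a = b := by
    intro a b hsa hsb he
    by_contra hne
    rcases lex_trichot hne with h | h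
    · obtain ⟨l, hl, _, _, hlt⟩ := key ht hn1 hn2 (hsa.trans hsb.symm) h
      rw [he] at hlt; exact lt_irrefl _ hlt
    · obtain ⟨l, hl, _, _, hlt⟩ := key ht hn1 hn2 (hsb.trans hsa.symm) h
      rw [he] at hlt; exact lt_irrefl _ hlt
  have hαinj : Function.Injective α := by
    intro i j hij
    rw [hα, hα] at hij
    have h1 : Emap n t (avec i) = Emap n t (avec j) :=
      monomial_left_injective (R := K) one_ne_zero hij
    have h2 : avec i = avec j := EmapInj _ _ (havsum i) (havsum j) h1
    have h3 : v i.rev = v j.rev := Subtype.ext (by rw [← havec2, ← havec2, h2])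
    exact Fin.rev_injective (v.injective h3)
  have hsurj : ∀ b : Fin (n - t + 1) → ℕ, (∑ i, b i = s) → ∃ j : Fin q, avec j = b := by
    intro b hb
    have hbA : w b ∈ A1 := Finset.mem_image_of_mem _ ((hA0 b).mpr hb)
    obtain ⟨p, hp⟩ := v.surjective ⟨w b, hbA⟩
    refine ⟨p.rev, ?_⟩
    have h5 : w (avec p.rev) = w b := by
      rw [havec2, Fin.rev_rev, hp]
    exact hwinj _ _ (havsum p.rev) hb h5
  have hrange : Set.range α = {β : MvPolynomial (Fin n) K |
      ∃ a : Fin (n - t + 1) → ℕ, (∑ i, a i) = s ∧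
        β = ∏ i : Fin (n - t + 1), upath K n t (i.val + 1) ^ a i} := by
    ext β
    constructor
    · rintro ⟨j, rfl⟩
      exact ⟨avec j, havsum j, by rw [hα, prod_upath_eq ht1 hn1]⟩
    · rintro ⟨a, ha, rfl⟩
      obtain ⟨p, hp⟩ := hsurj a ha
      exact ⟨p, by rw [hα, hp, prod_upath_eq ht1 hn1]⟩
  refine ⟨q, α, hαinj, hrange, ?_⟩
  intro j hj
  set a : Fin (n - t + 1) → ℕ := avec j with hadef
  set S0 : Set (Fin n) :=
    {ρ | ∃ l : Fin (n - t + 1), 1 ≤ l.val ∧ 0 < a l ∧ ρ.val = l.val - 1} with hS0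
  refine ⟨X '' S0, ?_, ?_⟩
  · rintro p ⟨ρ, _, rfl⟩; exact ⟨ρ, rfl⟩
  have himg : α '' {i | i < j} =
      (fun d => monomial d (1 : K)) ''
        {d | ∃ b : Fin (n - t + 1) → ℕ, (∑ i, b i = s) ∧ toLex a < toLex b ∧ d = Emap n t b} := by
    ext x
    constructor
    · rintro ⟨i, hi, rfl⟩
      exact ⟨Emap n t (avec i), ⟨avec i, havsum i, (hlt_iff i j).mp hi, rfl⟩, (hα i).symm⟩
    · rintro ⟨d, ⟨b, hbs, hab, rfl⟩, rfl⟩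
      obtain ⟨p, hp⟩ := hsurj b hbs
      refine ⟨p, ?_, ?_⟩
      · show p < j
        apply (hlt_iff p j).mpr
        rw [hp]
        exact hab
      · rw [hα, hp]
  apply le_antisymm
  · intro r hr
    rw [Ideal.mem_colon_span_singleton, hα j, himg, mem_ideal_span_monomial_image] at hr
    rw [mem_ideal_span_X_image]
    intro c hc
    have hsupp : (r * monomial (Emap n t a) (1 : K)).support
        = r.support.map (addRightEmbedding (Emap n t a)) :=
      AddMonoidAlgebra.support_coeff_mul_single r _ (by simp) _
    have hcmem : c + Emap n t a ∈ (r * monomial (Emap n t a) (1 : K)).support := by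
      rw [hsupp, Finset.mem_map]
      exact ⟨c, hc, rfl⟩
    obtain ⟨d, ⟨b, hbs, hab, rfl⟩, hle⟩ := hr _ hcmem
    obtain ⟨l, hl, hl1, hal, hlt⟩ := key ht hn1 hn2 ((havsum j).trans hbs.symm) hab
    rw [← hadef] at hlt hal
    refine ⟨⟨l.val - 1, hl⟩, ⟨l, hl1, hal, rfl⟩, ?_⟩
    have h6 := Finsupp.le_def.mp hle ⟨l.val - 1, hl⟩
    rw [Finsupp.add_apply] at h6
    omega
  · rw [Ideal.span_le]
    rintro x ⟨ρ, ⟨l, hl1, hal, hρ⟩, rfl⟩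
    rw [SetLike.mem_coe, Ideal.mem_colon_span_singleton, hα j]
    obtain ⟨a', hs', hlt', hlo, hhi, heq⟩ := swap (K := K) ht hn1 a l hl1 hal
    have hρeq : ρ = ⟨l.val - 1, hlo⟩ := Fin.ext hρ
    rw [hρeq, heq, himg]
    apply Ideal.mul_mem_left
    apply Ideal.subset_span
    exact ⟨Emap n t a', ⟨a', hs'.trans (havsum j), hlt', rfl⟩, rfl⟩
end

section
/- Assume n ≥ 2t+1 and let s ≥ 1 be an integer. Set α = u_{n−t+1}^s and let J be the ideal of R generated by all monomials u_1^{b_1} ⋯ u_{n−t+1}^{b_{n−t+1}} with b ∈ ℤ_{≥0}^{n−t+1}, b_1 + ⋯ + b_{n−t+1} = s, other than α itself. Then for each k with 1 ≤ k ≤ n, the variable x_k belongs to the colon ideal (J : α) if and only if k = n−t. -/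
open MvPolynomial

/-- Evaluation point: `x_j = 1` if `j = k` or `j ≥ n-t+1` (1-based), else `0`. -/
noncomputable def cfun (K : Type*) [Field K] (n t k : ℕ) : Fin n → K :=
  fun j => if j.val + 1 = k ∨ n - t ≤ j.val then 1 else 0

lemma eval_xvar_eq (K : Type*) [Field K] (n t k l : ℕ) (h1 : 1 ≤ l) (h2 : l ≤ n) :
    MvPolynomial.eval (cfun K n t k) (xvar K n l)
      = if l = k ∨ n - t + 1 ≤ l then 1 else 0 := by
  rw [xvar, dif_pos ⟨h1, h2⟩, eval_X]
  simp only [cfun]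
  split_ifs <;> first | rfl | (exfalso; omega)

lemma eval_upath_zero (K : Type*) [Field K] (n t k : ℕ) (ht : 2 ≤ t) (j : ℕ)
    (hj1 : 1 ≤ j) (hj2 : j ≤ n - t) (hk : k ≠ n - t) :
    MvPolynomial.eval (cfun K n t k) (upath K n t j) = 0 := by
  unfold upath
  rw [map_prod]
  by_cases hjk : j = k
  · apply Finset.prod_eq_zero (i := j + 1) (Finset.mem_Ico.mpr ⟨by omega, by omega⟩)
    rw [eval_xvar_eq K n t k (j + 1) (by omega) (by omega), if_neg (by omega)]
  · apply Finset.prod_eq_zero (i := j) (Finset.mem_Ico.mpr ⟨by omega, by omega⟩)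
    rw [eval_xvar_eq K n t k j (by omega) (by omega), if_neg (by omega)]

lemma eval_upath_top (K : Type*) [Field K] (n t k : ℕ) (htn : t ≤ n) :
    MvPolynomial.eval (cfun K n t k) (upath K n t (n - t + 1)) = 1 := by
  unfold upath
  rw [map_prod]
  apply Finset.prod_eq_one
  intro l hl
  rw [Finset.mem_Ico] at hl
  rw [eval_xvar_eq K n t k l (by omega) (by omega), if_pos (by omega)]

/-- for `n ≥ 2t+1`, with `α = u_{n-t+1}^s` and `J` generated by the other
degree-`st` products of the `u_i`, the variable `x_k` lies in `J : α` iff `k = n-t`. -/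
theorem stmt_5 (K : Type*) [Field K] (n t s : ℕ) (ht : 2 ≤ t) (hn : 2 * t + 1 ≤ n)
    (hs : 1 ≤ s) (k : ℕ) (hk1 : 1 ≤ k) (hk2 : k ≤ n) :
    xvar K n k ∈
        (Ideal.span {β : MvPolynomial (Fin n) K |
            (∃ b : Fin (n - t + 1) → ℕ, (∑ i, b i) = s ∧
              β = ∏ i : Fin (n - t + 1), upath K n t (i.val + 1) ^ b i) ∧
            β ≠ upath K n t (n - t + 1) ^ s}).colon
          (Ideal.span {upath K n t (n - t + 1) ^ s}) ↔ k = n - t := by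
  have hN3 : 3 ≤ n - t := by omega
  rw [Ideal.mem_colon_span_singleton]
  constructor
  · -- hard direction: if x_k * α ∈ J then k = n - t
    intro h
    by_contra hk
    have h0 : MvPolynomial.eval (cfun K n t k)
        (xvar K n k * upath K n t (n - t + 1) ^ s) = 0 := by
      have hsub : {β : MvPolynomial (Fin n) K |
            (∃ b : Fin (n - t + 1) → ℕ, (∑ i, b i) = s ∧
              β = ∏ i : Fin (n - t + 1), upath K n t (i.val + 1) ^ b i) ∧
            β ≠ upath K n t (n - t + 1) ^ s} ⊆
          ↑(RingHom.ker (MvPolynomial.eval (cfun K n t k))) := by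
        rintro β ⟨⟨b, hb, rfl⟩, hne⟩
        simp only [SetLike.mem_coe, RingHom.mem_ker]
        by_cases hall : ∀ i : Fin (n - t + 1), i.val + 1 ≤ n - t → b i = 0
        · exfalso
          apply hne
          have hlast : ∀ i ≠ (⟨n - t, by omega⟩ : Fin (n - t + 1)), b i = 0 := by
            intro i hi
            apply hall
            have hv := i.isLt
            have : i.val ≠ n - t := fun hh => hi (Fin.ext hh)
            omega
          have hsum : b ⟨n - t, by omega⟩ = s := by
            rw [← hb, Fintype.sum_eq_single _ hlast]
          rw [Fintype.prod_eq_single (⟨n - t, by omega⟩ : Fin (n - t + 1))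
              (fun i hi => by rw [hlast i hi, pow_zero]), hsum]
        · push_neg at hall
          obtain ⟨i, hile, hbi⟩ := hall
          rw [map_prod]
          apply Finset.prod_eq_zero (Finset.mem_univ i)
          rw [map_pow, eval_upath_zero K n t k ht (i.val + 1) (by omega) hile hk,
            zero_pow hbi]
      exact RingHom.mem_ker.mp (Ideal.span_le.mpr hsub h)
    rw [map_mul, map_pow, eval_xvar_eq K n t k k hk1 hk2, if_pos (Or.inl rfl),
      eval_upath_top K n t k (by omega), one_mul, one_pow] at h0
    exact one_ne_zero h0
  · -- easy direction
    intro hk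
    subst hk
    have key : xvar K n (n - t) * upath K n t (n - t + 1)
        = xvar K n n * upath K n t (n - t) := by
      have e1 : (∏ j ∈ Finset.Ico (n - t) (n + 1), xvar K n j)
          = xvar K n (n - t) * ∏ j ∈ Finset.Ico (n - t + 1) (n + 1), xvar K n j :=
        Finset.prod_eq_prod_Ico_succ_bot (by omega) _
      have e2 : (∏ j ∈ Finset.Ico (n - t) (n + 1), xvar K n j)
          = (∏ j ∈ Finset.Ico (n - t) n, xvar K n j) * xvar K n n :=
        Finset.prod_Ico_succ_top (by omega) _
      unfold upath
      rw [show n - t + 1 + t = n + 1 by omega, show n - t + t = n by omega, ← e1, e2]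
      ring
    set i0 : Fin (n - t + 1) := ⟨n - t - 1, by omega⟩ with hi0
    set i1 : Fin (n - t + 1) := ⟨n - t, by omega⟩ with hi1
    have hi01 : i0 ≠ i1 := by
      simp only [hi0, hi1, ne_eq, Fin.mk.injEq]
      omega
    set bfun : Fin (n - t + 1) → ℕ :=
      fun i => (if i = i0 then 1 else 0) + (if i = i1 then s - 1 else 0) with hbfun
    have hsum : (∑ i, bfun i) = s := by
      simp only [hbfun, Finset.sum_add_distrib, Finset.sum_ite_eq', Finset.mem_univ,
        if_true]
      omega
    have hprod : (∏ i : Fin (n - t + 1), upath K n t (i.val + 1) ^ bfun i)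
        = upath K n t (n - t) * upath K n t (n - t + 1) ^ (s - 1) := by
      simp only [hbfun, pow_add]
      rw [Finset.prod_mul_distrib]
      congr 1
      · rw [Fintype.prod_eq_single i0 (fun i hi => by rw [if_neg hi, pow_zero]),
          if_pos rfl, pow_one]
        congr 1
        simp only [hi0]
        omega
      · rw [Fintype.prod_eq_single i1 (fun i hi => by rw [if_neg hi, pow_zero]),
          if_pos rfl]
    have hne : upath K n t (n - t) * upath K n t (n - t + 1) ^ (s - 1)
        ≠ upath K n t (n - t + 1) ^ s := by
      intro heq
      have h1 : MvPolynomial.eval (cfun K n t 0)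
          (upath K n t (n - t) * upath K n t (n - t + 1) ^ (s - 1)) = 0 := by
        rw [map_mul, eval_upath_zero K n t 0 ht (n - t) (by omega) le_rfl (by omega),
          zero_mul]
      have h2 : MvPolynomial.eval (cfun K n t 0)
          (upath K n t (n - t + 1) ^ s) = 1 := by
        rw [map_pow, eval_upath_top K n t 0 (by omega), one_pow]
      rw [heq, h2] at h1
      exact one_ne_zero h1
    have hmem : upath K n t (n - t) * upath K n t (n - t + 1) ^ (s - 1) ∈
        {β : MvPolynomial (Fin n) K |
            (∃ b : Fin (n - t + 1) → ℕ, (∑ i, b i) = s ∧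
              β = ∏ i : Fin (n - t + 1), upath K n t (i.val + 1) ^ b i) ∧
            β ≠ upath K n t (n - t + 1) ^ s} :=
      ⟨⟨bfun, hsum, hprod.symm⟩, hne⟩
    have hrw : xvar K n (n - t) * upath K n t (n - t + 1) ^ s
        = xvar K n n * (upath K n t (n - t) * upath K n t (n - t + 1) ^ (s - 1)) := by
      have hpow : upath K n t (n - t + 1) ^ s
          = upath K n t (n - t + 1) * upath K n t (n - t + 1) ^ (s - 1) := by
        conv_lhs => rw [show s = s - 1 + 1 from by omega]
        rw [pow_succ]
        ring
      rw [hpow, ← mul_assoc, key]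
      ring
    rw [hrw]
    exact Ideal.mul_mem_left _ _ (Ideal.subset_span hmem)
end

section
/- Assume n ≥ 2t+1 and let s ≥ 1 be an integer. Set α = u_{n−t+1}^s and let J be the ideal of R generated by all monomials u_1^{b_1} ⋯ u_{n−t+1}^{b_{n−t+1}} with b ∈ ℤ_{≥0}^{n−t+1}, b_1 + ⋯ + b_{n−t+1} = s, other than α itself. Then there is no subset S ⊆ {x_1,…,x_n} of the variables such that the colon ideal (J : α) equals the ideal generated by S; in particular, I^s is not quasi-linear. -/
open MvPolynomial

lemma upath_eval_zero (K : Type*) [Field K] (n t : ℕ) (p : Fin n → K) (j k : ℕ)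
    (h1 : 1 ≤ j) (hjk : j ≤ k) (hkt : k < j + t) (hkn : k ≤ n)
    (hz : ∀ h : k - 1 < n, p ⟨k - 1, h⟩ = 0) :
    MvPolynomial.eval p (upath K n t j) = 0 := by
  unfold upath
  rw [map_prod]
  apply Finset.prod_eq_zero (Finset.mem_Ico.mpr ⟨hjk, hkt⟩)
  unfold xvar
  rw [dif_pos ⟨by omega, hkn⟩, eval_X]
  exact hz (by omega)

lemma upath_eval_one (K : Type*) [Field K] (n t : ℕ) (p : Fin n → K) (j : ℕ)
    (h1 : 1 ≤ j) (h2 : j + t ≤ n + 1)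
    (hone : ∀ k, ∀ h : k - 1 < n, j ≤ k → k < j + t → p ⟨k - 1, h⟩ = 1) :
    MvPolynomial.eval p (upath K n t j) = 1 := by
  unfold upath
  rw [map_prod]
  apply Finset.prod_eq_one
  intro k hk
  rw [Finset.mem_Ico] at hk
  unfold xvar
  rw [dif_pos ⟨by omega, by omega⟩, eval_X]
  exact hone k (by omega) hk.1 hk.2

/-- for `n ≥ 2t+1`, with `α = u_{n-t+1}^s` and `J` generated by the other
degree-`st` products of the `u_i`, the colon ideal `J : α` is not generated by any subset
of the variables; in particular `I_t(L_n)^s` is not quasi-linear. -/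
theorem stmt_6 (K : Type*) [Field K] (n t s : ℕ) (ht : 2 ≤ t) (hn : 2 * t + 1 ≤ n)
    (hs : 1 ≤ s) :
    ¬ ∃ S : Set (MvPolynomial (Fin n) K),
        S ⊆ {p | ∃ k : Fin n, p = MvPolynomial.X k} ∧
        (Ideal.span {β : MvPolynomial (Fin n) K |
            (∃ b : Fin (n - t + 1) → ℕ, (∑ i, b i) = s ∧
              β = ∏ i : Fin (n - t + 1), upath K n t (i.val + 1) ^ b i) ∧
            β ≠ upath K n t (n - t + 1) ^ s}).colon
          (Ideal.span {upath K n t (n - t + 1) ^ s})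
        = Ideal.span S := by
  rintro ⟨S, hSvar, hEq⟩
  set α : MvPolynomial (Fin n) K := upath K n t (n - t + 1) ^ s with hα
  set G : Set (MvPolynomial (Fin n) K) :=
    {β : MvPolynomial (Fin n) K |
      (∃ b : Fin (n - t + 1) → ℕ, (∑ i, b i) = s ∧
        β = ∏ i : Fin (n - t + 1), upath K n t (i.val + 1) ^ b i) ∧
      β ≠ upath K n t (n - t + 1) ^ s} with hG
  have hlastval : (⟨n - t, by omega⟩ : Fin (n - t + 1)).val = n - t := rfl
  set last : Fin (n - t + 1) := ⟨n - t, by omega⟩ with hlast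
  have hlast0 : last ≠ 0 := by
    intro h
    have := congrArg Fin.val h
    simp [hlast, Fin.val_zero] at this
    omega
  -- the generator β₀ = u₁ * u_{n-t+1}^{s-1}
  set β₀ : MvPolynomial (Fin n) K := upath K n t 1 * upath K n t (n - t + 1) ^ (s - 1)
    with hβ₀
  set b : Fin (n - t + 1) → ℕ :=
    fun i => if i = 0 then 1 else if i = last then s - 1 else 0 with hb
  have hb0 : b 0 = 1 := by simp [hb]
  have hblast : b last = s - 1 := by simp [hb, hlast0]
  have hbsum : (∑ i, b i) = s := by
    rw [← Finset.add_sum_erase _ b (Finset.mem_univ 0),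
      ← Finset.add_sum_erase _ b (Finset.mem_erase.mpr ⟨hlast0, Finset.mem_univ last⟩)]
    rw [hb0, hblast, Finset.sum_eq_zero]
    · omega
    · intro x hx
      rw [Finset.mem_erase, Finset.mem_erase] at hx
      simp [hb, hx.1, hx.2.1]
  have hbprod : (∏ i : Fin (n - t + 1), upath K n t (i.val + 1) ^ b i) = β₀ := by
    rw [← Finset.mul_prod_erase _ _ (Finset.mem_univ (0 : Fin (n - t + 1))),
      ← Finset.mul_prod_erase _ _
        (Finset.mem_erase.mpr ⟨hlast0, Finset.mem_univ last⟩)]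
    rw [Finset.prod_eq_one, hb0, hblast]
    · simp [hβ₀, hlastval]
    · intro x hx
      rw [Finset.mem_erase, Finset.mem_erase] at hx
      simp [hb, hx.1, hx.2.1]
  -- β₀ ≠ α, via evaluation at q (0 on first t variables, 1 elsewhere)
  have hβ₀ne : β₀ ≠ α := by
    intro h
    set q : Fin n → K := fun k => if k.val < t then 0 else 1 with hq
    have h1 : MvPolynomial.eval q β₀ = 0 := by
      rw [hβ₀, map_mul, upath_eval_zero K n t q 1 1 le_rfl le_rfl (by omega) (by omega)
        (by intro h'; simp [hq]; omega), zero_mul]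
    have h2 : MvPolynomial.eval q α = 1 := by
      rw [hα, map_pow, upath_eval_one K n t q (n - t + 1) (by omega) (by omega)
        (by intro k hk h1 h2; simp [hq]; omega), one_pow]
    rw [h, h2] at h1
    exact one_ne_zero h1
  have hβ₀G : β₀ ∈ G := ⟨⟨b, hbsum, hbprod.symm⟩, hβ₀ne⟩
  -- u₁ ∈ (J : α)
  have hu1 : upath K n t 1 ∈ Ideal.span S := by
    rw [← hEq]
    rw [Ideal.mem_colon_span_singleton]
    have : upath K n t 1 * α = β₀ * upath K n t (n - t + 1) := by
      rw [hβ₀, hα, mul_assoc, ← pow_succ, Nat.sub_add_cancel hs]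
    rw [this]
    exact Ideal.mul_mem_right _ _ (Ideal.subset_span hβ₀G)
  -- extract a variable X i ∈ S with i.val < t
  have hex : ∃ i : Fin n, MvPolynomial.X i ∈ S ∧ i.val < t := by
    by_contra hno
    push_neg at hno
    set r : Fin n → K := fun k => if k.val < t then 1 else 0 with hr
    have hker : Ideal.span S ≤ RingHom.ker (MvPolynomial.eval r) := by
      rw [Ideal.span_le]
      intro p hp
      obtain ⟨k, rfl⟩ := hSvar hp
      rw [SetLike.mem_coe, RingHom.mem_ker, eval_X, hr]
      simp only
      rw [if_neg]
      exact not_lt.mpr (hno k hp)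
    have h0 : MvPolynomial.eval r (upath K n t 1) = 0 := hker hu1
    have h1 : MvPolynomial.eval r (upath K n t 1) = 1 := by
      apply upath_eval_one K n t r 1 le_rfl (by omega)
      intro k hk h1 h2
      simp [hr]
      omega
    rw [h0] at h1
    exact zero_ne_one h1
  obtain ⟨i, hiS, hit⟩ := hex
  -- X i * α ∈ J
  have hXiα : MvPolynomial.X i * α ∈ Ideal.span G := by
    rw [← Ideal.mem_colon_span_singleton, hEq]
    exact Ideal.subset_span hiS
  -- evaluation killing all of G but not X i * α
  set p : Fin n → K := fun k => if k = i ∨ n - t ≤ k.val then 1 else 0 with hp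
  have hker : Ideal.span G ≤ RingHom.ker (MvPolynomial.eval p) := by
    rw [Ideal.span_le]
    intro β hβ
    obtain ⟨⟨c, hcsum, hcprod⟩, hne⟩ := hβ
    rw [SetLike.mem_coe, RingHom.mem_ker]
    by_cases hall : ∀ j, j ≠ last → c j = 0
    · exfalso
      apply hne
      have hclast : c last = s := by
        rw [← hcsum, Finset.sum_eq_single last (fun j _ hj => hall j hj)
          (fun h => absurd (Finset.mem_univ last) h)]
      rw [hcprod, Finset.prod_eq_single last
        (fun j _ hj => by rw [hall j hj, pow_zero])
        (fun h => absurd (Finset.mem_univ last) h), hclast, hlastval]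
    · push_neg at hall
      obtain ⟨j, hjlast, hcj⟩ := hall
      have hjval : j.val ≠ n - t := fun h => hjlast (Fin.ext (by rw [h, hlastval]))
      have hjle : j.val ≤ n - t - 1 := by have := j.isLt; omega
      rw [hcprod, map_prod]
      apply Finset.prod_eq_zero (Finset.mem_univ j)
      rw [map_pow]
      have hz : MvPolynomial.eval p (upath K n t (j.val + 1)) = 0 := by
        by_cases hji : j.val = i.val
        · apply upath_eval_zero K n t p (j.val + 1) (j.val + 2) (by omega) (by omega)
            (by omega) (by omega)
          intro h'
          simp only [hp, Nat.add_sub_cancel]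
          rw [if_neg]
          push_neg
          constructor
          · intro he
            have := congrArg Fin.val he
            simp at this
            omega
          · omega
        · apply upath_eval_zero K n t p (j.val + 1) (j.val + 1) (by omega) le_rfl
            (by omega) (by omega)
          intro h'
          simp only [hp, Nat.add_sub_cancel]
          rw [if_neg]
          push_neg
          constructor
          · intro he
            have := congrArg Fin.val he
            simp at this
            omega
          · omega
      rw [hz, zero_pow hcj]
  have h0 : MvPolynomial.eval p (MvPolynomial.X i * α) = 0 := hker hXiα
  have h1 : MvPolynomial.eval p (MvPolynomial.X i * α) = 1 := by
    rw [map_mul, eval_X, hα, map_pow]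
    rw [upath_eval_one K n t p (n - t + 1) (by omega) (by omega)
      (by intro k hk h1 h2; simp only [hp]; rw [if_pos (Or.inr (by omega))])]
    simp [hp]
  rw [h0] at h1
  exact zero_ne_one h1
end

section
/- For every integer s ≥ 2, the colon ideal of the s-th power of the t-path ideal by the last generator satisfies I_t(L_n)^s : u_{n−t+1} = I_t(L_n)^{s−1}. -/
open MvPolynomial

namespace Stmt11Aux

/-- Exponent vector of `x_j` (1-based). -/
noncomputable def fs (n j : ℕ) : Fin n →₀ ℕ :=
  if h : 1 ≤ j ∧ j ≤ n then Finsupp.single ⟨j - 1, by omega⟩ 1 else 0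

/-- Exponent vector of `u_i`. -/
noncomputable def dexp (n t i : ℕ) : Fin n →₀ ℕ :=
  ∑ j ∈ Finset.Ico i (i + t), fs n j

lemma xvar_eq (K : Type*) [Field K] {n j : ℕ} (h1 : 1 ≤ j) (h2 : j ≤ n) :
    xvar K n j = monomial (fs n j) 1 := by
  rw [xvar, fs, dif_pos ⟨h1, h2⟩, dif_pos ⟨h1, h2⟩]
  rfl

lemma prod_monomial (K : Type*) [Field K] {n : ℕ} (S : Finset ℕ) (g : ℕ → (Fin n →₀ ℕ)) :
    (∏ j ∈ S, monomial (g j) (1 : K)) = monomial (∑ j ∈ S, g j) 1 := by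
  classical
  induction S using Finset.induction with
  | empty => simp [monomial_zero']
  | insert _ _ hx ih =>
      rw [Finset.prod_insert hx, Finset.sum_insert hx, ih, monomial_mul, one_mul]

lemma upath_eq (K : Type*) [Field K] {n t i : ℕ} (hi : 1 ≤ i) (hin : i + t ≤ n + 1)
    (ht : 1 ≤ t) : upath K n t i = monomial (dexp n t i) 1 := by
  rw [upath, dexp, ← prod_monomial]
  refine Finset.prod_congr rfl fun j hj => ?_
  rw [Finset.mem_Ico] at hj
  exact xvar_eq K (by omega) (by omega)

lemma dexp_apply {n t i : ℕ} (hi : 1 ≤ i) (hin : i + t ≤ n + 1) (k : Fin n) :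
    dexp n t i k = if i ≤ k.val + 1 ∧ k.val + 1 < i + t then 1 else 0 := by
  rw [dexp, Finsupp.finset_sum_apply]
  have : ∀ j ∈ Finset.Ico i (i + t), fs n j k = if j = k.val + 1 then 1 else 0 := by
    intro j hj
    rw [Finset.mem_Ico] at hj
    rw [fs, dif_pos ⟨by omega, by omega⟩, Finsupp.single_apply]
    have : ((⟨j - 1, by omega⟩ : Fin n) = k) ↔ (j = k.val + 1) := by
      rw [Fin.ext_iff]; simp only []; omega
    simp only [this]
  rw [Finset.sum_congr rfl this, Finset.sum_ite_eq' (Finset.Ico i (i + t)) (k.val + 1)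
    (fun _ => (1 : ℕ))]
  simp [Finset.mem_Ico]

/-- Exponent vectors of products of `s` generators. -/
def TT (n t m s : ℕ) : Set (Fin n →₀ ℕ) :=
  {a | ∃ l : List ℕ, l.length = s ∧ (∀ q ∈ l, 1 ≤ q ∧ q ≤ m) ∧ a = (l.map (dexp n t)).sum}

lemma spanpow (K : Type*) [Field K] {n t : ℕ} (ht : 1 ≤ t) (hn : t ≤ n) (s : ℕ) :
    (Ideal.span {p : MvPolynomial (Fin n) K |
        ∃ i, 1 ≤ i ∧ i ≤ n - t + 1 ∧ p = upath K n t i}) ^ s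
      = Ideal.span ((fun a => monomial a (1 : K)) '' TT n t (n - t + 1) s) := by
  induction s with
  | zero =>
      rw [pow_zero]
      have himg : ((fun a => monomial a (1 : K)) '' TT n t (n - t + 1) 0) = {1} := by
        ext x
        constructor
        · rintro ⟨a, ⟨l, hlen, -, rfl⟩, rfl⟩
          rw [List.length_eq_zero_iff] at hlen
          subst hlen
          simp [monomial_zero']
        · rintro rfl
          exact ⟨0, ⟨[], rfl, by simp, by simp⟩, by simp [monomial_zero']⟩
      rw [himg, Ideal.span_singleton_one, Ideal.one_eq_top]
  | succ s ih =>
      rw [pow_succ, ih, Ideal.span_mul_span']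
      congr 1
      ext x
      constructor
      · rintro ⟨y, ⟨a, ⟨l, hlen, hql, rfl⟩, rfl⟩, z, ⟨i, hi1, hi2, rfl⟩, rfl⟩
        refine ⟨(l ++ [i]).map (dexp n t) |>.sum, ⟨l ++ [i], by simp [hlen], ?_, rfl⟩, ?_⟩
        · intro q hq
          rcases List.mem_append.mp hq with h | h
          · exact hql q h
          · simp at h; subst h; exact ⟨hi1, hi2⟩
        · have hup : upath K n t i = monomial (dexp n t i) 1 := upath_eq K hi1 (by omega) ht
          simp only [hup, monomial_mul, one_mul,
            List.map_append, List.sum_append, List.map_cons, List.map_nil,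
            List.sum_cons, List.sum_nil, add_zero]
      · rintro ⟨a, ⟨l, hlen, hql, rfl⟩, rfl⟩
        rcases l with - | ⟨q, l'⟩
        · simp at hlen
        · have hq := hql q (by simp)
          refine ⟨monomial ((l'.map (dexp n t)).sum) 1,
            ⟨(l'.map (dexp n t)).sum, ⟨l', by simpa using hlen,
              fun r hr => hql r (List.mem_cons_of_mem _ hr), rfl⟩, rfl⟩,
            upath K n t q, ⟨q, hq.1, hq.2, rfl⟩, ?_⟩
          have hup : upath K n t q = monomial (dexp n t q) 1 := upath_eq K hq.1 (by omega) ht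
          simp only [hup, monomial_mul, one_mul,
            List.map_cons, List.sum_cons]
          rw [add_comm]

lemma list_exists_max (l : List ℕ) (h : l ≠ []) : ∃ p ∈ l, ∀ q ∈ l, q ≤ p := by
  induction l with
  | nil => exact absurd rfl h
  | cons x xs ih =>
      rcases xs with - | ⟨y, ys⟩
      · exact ⟨x, by simp, by simp⟩
      · obtain ⟨p, hp, hmax⟩ := ih (by simp)
        by_cases hxp : x ≤ p
        · exact ⟨p, List.mem_cons_of_mem _ hp, by
            intro q hq
            rcases List.mem_cons.mp hq with rfl | hq
            · exact hxp
            · exact hmax q hq⟩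
        · exact ⟨x, by simp, by
            intro q hq
            rcases List.mem_cons.mp hq with rfl | hq
            · exact le_refl q
            · exact le_trans (hmax q hq) (by omega)⟩

lemma sum_apply_list (n t : ℕ) (l : List ℕ) (k : Fin n) :
    ((l.map (dexp n t)).sum) k = (l.map (fun q => dexp n t q k)).sum := by
  induction l with
  | nil => simp
  | cons q l ih => simp [Finsupp.add_apply, ih]

lemma core {n t : ℕ} (ht : 2 ≤ t) (hn : t ≤ n) {s : ℕ} (hs : 1 ≤ s) (b : Fin n →₀ ℕ)
    (a : Fin n →₀ ℕ) (ha : a ∈ TT n t (n - t + 1) s)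
    (hab : a ≤ b + dexp n t (n - t + 1)) :
    ∃ a' ∈ TT n t (n - t + 1) (s - 1), a' ≤ b := by
  obtain ⟨l, hlen, hql, rfl⟩ := ha
  have hlne : l ≠ [] := by
    intro h; subst h; simp at hlen; omega
  obtain ⟨p, hp, hmax⟩ := list_exists_max l hlne
  have hperm : l.Perm (p :: l.erase p) := List.perm_cons_erase hp
  set l' := l.erase p with hl'
  refine ⟨(l'.map (dexp n t)).sum, ⟨l', ?_, fun q hq => hql q (List.mem_of_mem_erase hq), rfl⟩, ?_⟩
  · rw [hl', List.length_erase_of_mem hp, hlen]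
  · have hsum : ((l.map (dexp n t)).sum) = dexp n t p + (l'.map (dexp n t)).sum := by
      rw [List.Perm.sum_eq (List.Perm.map (dexp n t) hperm)]
      simp
    rw [Finsupp.le_def] at hab ⊢
    intro k
    have hk := hab k
    rw [hsum, Finsupp.add_apply, Finsupp.add_apply] at hk
    have hp1 := hql p hp
    have hdm := dexp_apply (n := n) (t := t) (i := n - t + 1) (by omega) (by omega) k
    have hdp := dexp_apply (n := n) (t := t) (i := p) hp1.1 (by omega) k
    by_cases hek : n - t + 1 ≤ k.val + 1 ∧ k.val + 1 < n - t + 1 + t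
    · rw [if_pos hek] at hdm
      by_cases hpk : p ≤ k.val + 1 ∧ k.val + 1 < p + t
      · rw [if_pos hpk] at hdp
        omega
      · rw [if_neg hpk] at hdp
        -- then p < n - t + 1 and k.val + 1 ≥ p + t, so all entries of l vanish at k
        have hpm : p < n - t + 1 := by
          rcases Nat.lt_or_ge p (n - t + 1) with h | h
          · exact h
          · exfalso; apply hpk; constructor <;> omega
        have hkp : p + t ≤ k.val + 1 := by omega
        have hzero : ((l'.map (dexp n t)).sum) k = 0 := by
          rw [sum_apply_list]
          apply List.sum_eq_zero
          intro x hx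
          rw [List.mem_map] at hx
          obtain ⟨q, hq, rfl⟩ := hx
          have hq1 := hql q (List.mem_of_mem_erase hq)
          have hqp := hmax q (List.mem_of_mem_erase hq)
          rw [dexp_apply hq1.1 (by omega) k, if_neg (by omega)]
        omega
    · rw [if_neg hek] at hdm
      omega

end Stmt11Aux

open Stmt11Aux in
/-- `I_t(L_n)^s : u_{n-t+1} = I_t(L_n)^{s-1}` for `s ≥ 2`. -/
theorem stmt_11 (K : Type*) [Field K] (n t s : ℕ) (ht : 2 ≤ t) (hn : t ≤ n) (hs : 2 ≤ s) :
    ((Ideal.span {p : MvPolynomial (Fin n) K |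
          ∃ i, 1 ≤ i ∧ i ≤ n - t + 1 ∧ p = upath K n t i}) ^ s).colon
        (Ideal.span {upath K n t (n - t + 1)})
      = (Ideal.span {p : MvPolynomial (Fin n) K |
          ∃ i, 1 ≤ i ∧ i ≤ n - t + 1 ∧ p = upath K n t i}) ^ (s - 1) := by
  have ht1 : 1 ≤ t := by omega
  have hu : upath K n t (n - t + 1) = monomial (dexp n t (n - t + 1)) 1 :=
    upath_eq K (by omega) (by omega) ht1
  ext f
  rw [Ideal.mem_colon_span_singleton]
  constructor
  · intro hf
    rw [spanpow K ht1 hn s, mem_ideal_span_monomial_image] at hf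
    rw [spanpow K ht1 hn (s - 1), mem_ideal_span_monomial_image]
    intro b hb
    have hb' : b + dexp n t (n - t + 1) ∈ (f * upath K n t (n - t + 1)).support := by
      rw [mem_support_iff] at hb ⊢
      rw [hu, coeff_mul_monomial, mul_one]
      exact hb
    obtain ⟨a, haT, hab⟩ := hf _ hb'
    exact core ht hn (by omega) b a haT hab
  · intro hf
    have hsplit : (Ideal.span {p : MvPolynomial (Fin n) K |
        ∃ i, 1 ≤ i ∧ i ≤ n - t + 1 ∧ p = upath K n t i}) ^ s
        = (Ideal.span {p : MvPolynomial (Fin n) K |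
        ∃ i, 1 ≤ i ∧ i ≤ n - t + 1 ∧ p = upath K n t i}) ^ (s - 1)
          * Ideal.span {p : MvPolynomial (Fin n) K |
        ∃ i, 1 ≤ i ∧ i ≤ n - t + 1 ∧ p = upath K n t i} := by
      rw [← pow_succ]
      congr 1
      omega
    rw [hsplit]
    exact Ideal.mul_mem_mul hf (Ideal.subset_span ⟨n - t + 1, by omega, le_refl _, rfl⟩)
end

section
/- Assume n ≥ 2t+1 and let s ≥ 2 and j be integers with 1 ≤ j ≤ n−t. Then, as ideals of R, (I^s + (u_{n−t+1}, u_{n−t}, …, u_{n−t−j+2})) : u_{n−t−j+1} = (u_1, …, u_{n−t−j+1})^{s−1} + (u_{n−t+1}, u_{n−t}, …, u_{n−j+2}) + (x_{n−j+1}), where for j = 1 the lists (u_{n−t+1},…,u_{n−t−j+2}) and (u_{n−t+1},…,u_{n−j+2}) are interpreted respectively as the single element u_{n−t+1} and as the empty list (generating the zero ideal). -/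
open MvPolynomial

namespace Stmt13
variable {K : Type*} [Field K]

noncomputable def dvar (n : ℕ) (i : ℕ) : Fin n →₀ ℕ :=
  if h : 1 ≤ i ∧ i ≤ n then Finsupp.single ⟨i - 1, by omega⟩ 1 else 0

noncomputable def D (n t : ℕ) (i : ℕ) : Fin n →₀ ℕ :=
  ∑ j ∈ Finset.Ico i (i + t), dvar n j

lemma xvar_eq {n i : ℕ} (h1 : 1 ≤ i) (h2 : i ≤ n) :
    xvar K n i = monomial (dvar n i) 1 := by
  rw [xvar, dvar, dif_pos ⟨h1, h2⟩, dif_pos ⟨h1, h2⟩]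
  rfl

lemma dvar_apply {n i : ℕ} (h1 : 1 ≤ i) (h2 : i ≤ n) (b : Fin n) :
    dvar n i b = if (b : ℕ) + 1 = i then 1 else 0 := by
  rw [dvar, dif_pos ⟨h1, h2⟩, Finsupp.single_apply]
  have : ((⟨i - 1, by omega⟩ : Fin n) = b) ↔ ((b : ℕ) + 1 = i) := by
    rw [Fin.ext_iff]
    constructor <;> intro h <;> simp_all <;> omega
  rw [if_congr this rfl rfl]

lemma prod_mon {n : ℕ} (s : Finset ℕ) (f : ℕ → (Fin n →₀ ℕ)) :
    (∏ j ∈ s, (monomial (f j) (1:K))) = monomial (∑ j ∈ s, f j) 1 := by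
  classical
  induction s using Finset.induction_on with
  | empty => simp
  | @insert a s hx ih =>
    rw [Finset.prod_insert hx, Finset.sum_insert hx, ih, monomial_mul, one_mul]

lemma upath_eq {n t i : ℕ} (h1 : 1 ≤ i) (h2 : i + t ≤ n + 1) :
    upath K n t i = monomial (D n t i) 1 := by
  rw [upath, D, ← prod_mon]
  refine Finset.prod_congr rfl fun j hj => ?_
  rw [Finset.mem_Ico] at hj
  exact xvar_eq (by omega) (by omega)

lemma D_apply {n t i : ℕ} (h1 : 1 ≤ i) (h2 : i + t ≤ n + 1) (b : Fin n) :
    D n t i b = if i ≤ (b:ℕ) + 1 ∧ (b:ℕ) + 1 < i + t then 1 else 0 := by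
  rw [D]
  have hsum : (∑ j ∈ Finset.Ico i (i + t), dvar n j) b
      = ∑ j ∈ Finset.Ico i (i + t), dvar n j b :=
    map_sum (Finsupp.applyAddHom b) _ _
  have h2s : ∑ j ∈ Finset.Ico i (i + t), dvar n j b
      = ∑ j ∈ Finset.Ico i (i + t), if (b:ℕ) + 1 = j then 1 else 0 :=
    Finset.sum_congr rfl (fun k hk => by
      rw [Finset.mem_Ico] at hk
      exact dvar_apply (by omega) (by omega) b)
  rw [hsum, h2s, Finset.sum_ite_eq (Finset.Ico i (i + t)) ((b:ℕ)+1) (fun _ => 1)]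
  by_cases h : (b:ℕ) + 1 ∈ Finset.Ico i (i + t)
  · rw [if_pos h]
    rw [Finset.mem_Ico] at h
    rw [if_pos (by omega)]
  · rw [if_neg h]
    rw [Finset.mem_Ico] at h
    rw [if_neg (by omega)]

lemma listsum_apply {n : ℕ} (L : List (Fin n →₀ ℕ)) (b : Fin n) :
    L.sum b = (L.map (fun e => e b)).sum := by
  induction L with
  | nil => rfl
  | cons a tail ih => simp [Finsupp.add_apply, ih]

lemma exists_max (L : List ℕ) (h : L ≠ []) : ∃ i ∈ L, ∀ k ∈ L, k ≤ i := by
  induction L with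
  | nil => exact absurd rfl h
  | cons a tail ih =>
    rcases eq_or_ne tail [] with rfl | hne
    · exact ⟨a, by simp⟩
    · obtain ⟨i, hi, hmax⟩ := ih hne
      by_cases hai : a ≤ i
      · refine ⟨i, List.mem_cons_of_mem _ hi, fun k hk => ?_⟩
        rcases List.mem_cons.1 hk with rfl | hk
        · exact hai
        · exact hmax k hk
      · refine ⟨a, List.mem_cons_self, fun k hk => ?_⟩
        rcases List.mem_cons.1 hk with rfl | hk
        · exact le_refl _
        · exact (hmax k hk).trans (by omega)

lemma mem_le_sum {n : ℕ} {L : List (Fin n →₀ ℕ)} {x : Fin n →₀ ℕ} (hx : x ∈ L) :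
    x ≤ L.sum := by
  rw [(List.perm_cons_erase hx).sum_eq, List.sum_cons]
  exact le_add_right (le_refl x)

def sumsOf {n : ℕ} (E : Set (Fin n →₀ ℕ)) : ℕ → Set (Fin n →₀ ℕ)
  | 0 => {0}
  | s+1 => {e | ∃ a ∈ E, ∃ b ∈ sumsOf E s, e = a + b}

lemma span_mon_pow {n : ℕ} (E : Set (Fin n →₀ ℕ)) (s : ℕ) :
    (Ideal.span ((fun e => monomial e (1:K)) '' E)) ^ s
      = Ideal.span ((fun e => monomial e (1:K)) '' sumsOf E s) := by
  induction s with
  | zero =>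
    rw [pow_zero, Ideal.one_eq_top]
    rw [show sumsOf E 0 = {0} from rfl, Set.image_singleton]
    rw [show (monomial (0 : Fin n →₀ ℕ) (1:K)) = 1 by simp]
    rw [Ideal.span_singleton_one]
  | succ s ih =>
    rw [pow_succ', ih, Ideal.span_mul_span']
    congr 1
    ext x
    constructor
    · rintro ⟨y, ⟨a, ha, rfl⟩, z, ⟨b, hb, rfl⟩, rfl⟩
      exact ⟨a + b, ⟨a, ha, b, hb, rfl⟩, by simp [monomial_mul]⟩
    · rintro ⟨e, ⟨a, ha, b, hb, rfl⟩, rfl⟩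
      exact ⟨monomial a 1, ⟨a, ha, rfl⟩, monomial b 1, ⟨b, hb, rfl⟩,
        by simp [monomial_mul]⟩

def PGen (n t lo hi : ℕ) : Set (Fin n →₀ ℕ) := {e | ∃ i, lo ≤ i ∧ i ≤ hi ∧ e = D n t i}

lemma mem_sumsOf_PGen {n t lo hi : ℕ} {s : ℕ} {e : Fin n →₀ ℕ} :
    e ∈ sumsOf (PGen n t lo hi) s ↔
      ∃ L : List ℕ, L.length = s ∧ (∀ i ∈ L, lo ≤ i ∧ i ≤ hi)
        ∧ e = (L.map (D n t)).sum := by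
  induction s generalizing e with
  | zero =>
    constructor
    · intro he
      refine ⟨[], rfl, by simp, ?_⟩
      simpa [sumsOf] using he
    · rintro ⟨L, hlen, -, rfl⟩
      rw [List.length_eq_zero_iff] at hlen
      subst hlen
      simp [sumsOf]
  | succ s ih =>
    constructor
    · rintro ⟨a, ⟨i, hlo, hhi, rfl⟩, b, hb, rfl⟩
      obtain ⟨L, hlen, hbnd, rfl⟩ := ih.1 hb
      refine ⟨i :: L, by simp [hlen], ?_, by simp⟩
      intro k hk
      rcases List.mem_cons.1 hk with rfl | hk
      · exact ⟨hlo, hhi⟩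
      · exact hbnd k hk
    · rintro ⟨L, hlen, hbnd, rfl⟩
      cases L with
      | nil => simp at hlen
      | cons i tl =>
        have hi := hbnd i (List.mem_cons_self)
        refine ⟨D n t i, ⟨i, hi.1, hi.2, rfl⟩, (tl.map (D n t)).sum, ?_, by simp⟩
        refine ih.2 ⟨tl, by simpa using hlen, fun k hk => hbnd k (List.mem_cons_of_mem _ hk), rfl⟩

lemma upath_set_eq {n t a b : ℕ} (ha : 1 ≤ a) (hb : b + t ≤ n + 1) :
    {p : MvPolynomial (Fin n) K | ∃ i, a ≤ i ∧ i ≤ b ∧ p = upath K n t i}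
      = (fun e => monomial e (1:K)) '' PGen n t a b := by
  ext p
  simp only [Set.mem_setOf_eq, Set.mem_image, PGen]
  constructor
  · rintro ⟨i, h1, h2, rfl⟩
    exact ⟨D n t i, ⟨i, h1, h2, rfl⟩, (upath_eq (by omega) (by omega)).symm⟩
  · rintro ⟨e, ⟨i, h1, h2, rfl⟩, rfl⟩
    exact ⟨i, h1, h2, (upath_eq (by omega) (by omega)).symm⟩


lemma caseA {n t j : ℕ} (ht : 2 ≤ t) (hn : 2*t+1 ≤ n) (hj1 : 1 ≤ j) (hj2 : j ≤ n - t)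
    {xi : Fin n →₀ ℕ} {i : ℕ} (hi1 : n - t - j + 2 ≤ i) (hi2 : i ≤ n - t + 1)
    (hle : D n t i ≤ xi + D n t (n - t - j + 1)) :
    (∃ i', n - j + 2 ≤ i' ∧ i' ≤ n - t + 1 ∧ D n t i' ≤ xi) ∨ dvar n (n - j + 1) ≤ xi := by
  rw [Finsupp.le_def] at hle
  by_cases hcase : n - j + 2 ≤ i
  · left
    refine ⟨i, hcase, hi2, Finsupp.le_def.2 fun b => ?_⟩
    have h := hle b
    rw [Finsupp.add_apply, D_apply (by omega) (by omega),
      D_apply (by omega) (by omega)] at h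
    rw [D_apply (by omega) (by omega)]
    split_ifs at h ⊢ <;> omega
  · right
    rw [Finsupp.le_def]
    intro b
    have h := hle b
    rw [Finsupp.add_apply, D_apply (by omega) (by omega),
      D_apply (by omega) (by omega)] at h
    rw [dvar_apply (by omega) (by omega)]
    split_ifs at h ⊢ <;> omega

lemma crux_forward {n t s j : ℕ} (ht : 2 ≤ t) (hn : 2*t+1 ≤ n) (hs : 2 ≤ s)
    (hj1 : 1 ≤ j) (hj2 : j ≤ n - t)
    {xi e : Fin n →₀ ℕ}
    (he : e ∈ sumsOf (PGen n t 1 (n-t+1)) s ∪ PGen n t (n-t-j+2) (n-t+1))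
    (hle : e ≤ xi + D n t (n-t-j+1)) :
    ∃ e' ∈ sumsOf (PGen n t 1 (n-t-j+1)) (s-1) ∪ PGen n t (n-j+2) (n-t+1)
            ∪ {dvar n (n-j+1)}, e' ≤ xi := by
  have wrap : (∃ i', n - j + 2 ≤ i' ∧ i' ≤ n - t + 1 ∧ D n t i' ≤ xi) ∨ dvar n (n - j + 1) ≤ xi →
      ∃ e' ∈ sumsOf (PGen n t 1 (n-t-j+1)) (s-1) ∪ PGen n t (n-j+2) (n-t+1)
            ∪ {dvar n (n-j+1)}, e' ≤ xi := by
    rintro (⟨i', h1, h2, h3⟩ | h)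
    · exact ⟨D n t i', Or.inl (Or.inr ⟨i', h1, h2, rfl⟩), h3⟩
    · exact ⟨dvar n (n-j+1), Or.inr rfl, h⟩
  rcases he with he | he
  · rw [mem_sumsOf_PGen] at he
    obtain ⟨L, hlen, hbnd, rfl⟩ := he
    by_cases hex : ∃ i ∈ L, n - t - j + 2 ≤ i
    · obtain ⟨i, hiL, hige⟩ := hex
      have hDile : D n t i ≤ (L.map (D n t)).sum :=
        mem_le_sum (List.mem_map_of_mem hiL)
      exact wrap (caseA ht hn hj1 hj2 hige (hbnd i hiL).2 (hDile.trans hle))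
    · push_neg at hex
      have hLne : L ≠ [] := by
        intro hc
        rw [hc] at hlen
        simp at hlen
        omega
      obtain ⟨i0, hi0L, hmax⟩ := exists_max L hLne
      set L2 := L.erase i0 with hL2
      have hperm : List.Perm L (i0 :: L2) := List.perm_cons_erase hi0L
      have hlen2 : L2.length = s - 1 := by
        rw [hL2, List.length_erase_of_mem hi0L, hlen]
      have hbnd2 : ∀ i ∈ L2, 1 ≤ i ∧ i ≤ n - t - j + 1 := by
        intro i hi
        have hiL : i ∈ L := List.mem_of_mem_erase hi
        have h1 := (hbnd i hiL).1
        have h2 := hex i hiL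
        omega
      have hsumeq : (L.map (D n t)).sum = D n t i0 + (L2.map (D n t)).sum := by
        rw [(hperm.map (D n t)).sum_eq, List.map_cons, List.sum_cons]
      refine ⟨(L2.map (D n t)).sum, Or.inl (Or.inl (mem_sumsOf_PGen.2 ⟨L2, hlen2, hbnd2, rfl⟩)),
        Finsupp.le_def.2 fun b => ?_⟩
      have h := Finsupp.le_def.1 hle b
      rw [hsumeq, Finsupp.add_apply, Finsupp.add_apply,
        D_apply (by have := (hbnd i0 hi0L).1; omega) (by have := (hbnd i0 hi0L).2; omega),
        D_apply (by omega) (by omega)] at h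
      have hz : ¬ (i0 ≤ (b:ℕ) + 1 ∧ (b:ℕ) + 1 < i0 + t) →
          (n - t - j + 1 ≤ (b:ℕ) + 1 ∧ (b:ℕ) + 1 < n - t - j + 1 + t) →
          ((L2.map (D n t)).sum) b = 0 := by
        intro hc1 hc2
        rw [listsum_apply, List.map_map]
        apply List.sum_eq_zero
        intro x hx
        rw [List.mem_map] at hx
        obtain ⟨i, hiL2, rfl⟩ := hx
        obtain ⟨hia, hib⟩ := hbnd2 i hiL2
        have hii0 := hmax i (List.mem_of_mem_erase hiL2)
        have hi0m := hex i0 hi0L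
        show D n t i b = 0
        rw [D_apply (by omega) (by omega)]
        rw [if_neg (by omega)]
      split_ifs at h with hc1 hc2 <;> omega
  · obtain ⟨i, h1, h2, rfl⟩ := he
    exact wrap (caseA ht hn hj1 hj2 h1 h2 hle)

lemma crux_backward {n t s j : ℕ} (ht : 2 ≤ t) (hn : 2*t+1 ≤ n) (hs : 2 ≤ s)
    (hj1 : 1 ≤ j) (hj2 : j ≤ n - t)
    {w e' : Fin n →₀ ℕ}
    (he : e' ∈ sumsOf (PGen n t 1 (n-t-j+1)) (s-1) ∪ PGen n t (n-j+2) (n-t+1)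
            ∪ {dvar n (n-j+1)})
    (hle : e' ≤ w) :
    ∃ e ∈ sumsOf (PGen n t 1 (n-t+1)) s ∪ PGen n t (n-t-j+2) (n-t+1),
      e ≤ w + D n t (n-t-j+1) := by
  rcases he with (he | he) | he
  · rw [mem_sumsOf_PGen] at he
    obtain ⟨L, hlen, hbnd, rfl⟩ := he
    refine ⟨(((n-t-j+1) :: L).map (D n t)).sum, Or.inl (mem_sumsOf_PGen.2
      ⟨(n-t-j+1) :: L, by simp only [List.length_cons, hlen]; omega, ?_, rfl⟩), ?_⟩
    · intro i hi
      rcases List.mem_cons.1 hi with rfl | hi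
      · omega
      · have := hbnd i hi
        omega
    · rw [List.map_cons, List.sum_cons, add_comm]
      exact add_le_add hle (le_refl _)
  · obtain ⟨i, h1, h2, rfl⟩ := he
    refine ⟨D n t i, Or.inr ⟨i, by omega, h2, rfl⟩, hle.trans ?_⟩
    exact le_add_right (le_refl w)
  · rw [Set.mem_singleton_iff] at he
    subst he
    refine ⟨D n t (n-t-j+2), Or.inr ⟨n-t-j+2, le_refl _, by omega, rfl⟩,
      Finsupp.le_def.2 fun b => ?_⟩
    have hw := Finsupp.le_def.1 hle b
    rw [dvar_apply (by omega) (by omega)] at hw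
    rw [Finsupp.add_apply, D_apply (by omega) (by omega),
      D_apply (by omega) (by omega)]
    split_ifs at hw ⊢ <;> omega

end Stmt13

open Stmt13 in
/-- for `n ≥ 2t+1`, `s ≥ 2` and `1 ≤ j ≤ n-t`,
`(I^s + (u_{n-t+1},…,u_{n-t-j+2})) : u_{n-t-j+1}
  = (u_1,…,u_{n-t-j+1})^{s-1} + (u_{n-t+1},…,u_{n-j+2}) + (x_{n-j+1})`. -/
theorem stmt_13 (K : Type*) [Field K] (n t s : ℕ) (ht : 2 ≤ t) (hn : 2 * t + 1 ≤ n)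
    (hs : 2 ≤ s) (j : ℕ) (hj1 : 1 ≤ j) (hj2 : j ≤ n - t) :
    ((Ideal.span {p : MvPolynomial (Fin n) K |
            ∃ i, 1 ≤ i ∧ i ≤ n - t + 1 ∧ p = upath K n t i}) ^ s
        + Ideal.span {p : MvPolynomial (Fin n) K |
            ∃ i, n - t - j + 2 ≤ i ∧ i ≤ n - t + 1 ∧ p = upath K n t i}).colon
        (Ideal.span {upath K n t (n - t - j + 1)})
      = (Ideal.span {p : MvPolynomial (Fin n) K |
            ∃ i, 1 ≤ i ∧ i ≤ n - t - j + 1 ∧ p = upath K n t i}) ^ (s - 1)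
        + Ideal.span {p : MvPolynomial (Fin n) K |
            ∃ i, n - j + 2 ≤ i ∧ i ≤ n - t + 1 ∧ p = upath K n t i}
        + Ideal.span {xvar K n (n - j + 1)} := by
  have hL : (Ideal.span {p : MvPolynomial (Fin n) K |
            ∃ i, 1 ≤ i ∧ i ≤ n - t + 1 ∧ p = upath K n t i}) ^ s
        + Ideal.span {p : MvPolynomial (Fin n) K |
            ∃ i, n - t - j + 2 ≤ i ∧ i ≤ n - t + 1 ∧ p = upath K n t i}
      = Ideal.span ((fun e => monomial e (1:K)) ''
          (sumsOf (PGen n t 1 (n-t+1)) s ∪ PGen n t (n-t-j+2) (n-t+1))) := by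
    rw [upath_set_eq (le_refl 1) (by omega), upath_set_eq (by omega) (by omega),
      span_mon_pow, Set.image_union, Ideal.span_union, Submodule.add_eq_sup]
  have hR : (Ideal.span {p : MvPolynomial (Fin n) K |
            ∃ i, 1 ≤ i ∧ i ≤ n - t - j + 1 ∧ p = upath K n t i}) ^ (s - 1)
        + Ideal.span {p : MvPolynomial (Fin n) K |
            ∃ i, n - j + 2 ≤ i ∧ i ≤ n - t + 1 ∧ p = upath K n t i}
        + Ideal.span {xvar K n (n - j + 1)}
      = Ideal.span ((fun e => monomial e (1:K)) ''
          (sumsOf (PGen n t 1 (n-t-j+1)) (s-1) ∪ PGen n t (n-j+2) (n-t+1)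
            ∪ {dvar n (n-j+1)})) := by
    rw [upath_set_eq (le_refl 1) (by omega), upath_set_eq (by omega) (by omega),
      span_mon_pow, Set.image_union, Set.image_union, Ideal.span_union, Ideal.span_union,
      Set.image_singleton, xvar_eq (by omega) (by omega),
      Submodule.add_eq_sup, Submodule.add_eq_sup]
  rw [hL, hR, upath_eq (K := K) (n := n) (t := t) (i := n - t - j + 1) (by omega) (by omega)]
  ext p
  rw [Ideal.mem_colon_span_singleton, mem_ideal_span_monomial_image, mem_ideal_span_monomial_image]
  constructor
  · intro H xi hxi
    have hxi' : xi + D n t (n-t-j+1) ∈ (p * monomial (D n t (n-t-j+1)) (1:K)).support := by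
      rw [mem_support_iff, coeff_mul_monomial, mul_one]
      exact mem_support_iff.1 hxi
    obtain ⟨e, he, hle⟩ := H _ hxi'
    exact crux_forward ht hn hs hj1 hj2 he hle
  · intro H xi hxi
    rw [mem_support_iff, coeff_mul_monomial'] at hxi
    split_ifs at hxi with hdm
    · have hxi2 : xi - D n t (n-t-j+1) ∈ p.support := by
        rw [mem_support_iff]
        intro hc
        rw [hc, zero_mul] at hxi
        exact hxi rfl
      obtain ⟨e', he', hle'⟩ := H _ hxi2
      obtain ⟨e, he, hle⟩ := crux_backward ht hn hs hj1 hj2 he' hle'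
      refine ⟨e, he, hle.trans ?_⟩
      rw [tsub_add_cancel_of_le hdm]
    · exact absurd rfl hxi
end
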